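/- arXiv:2411.07932 — 9 statements merged into one kernel-verified Lean document; each statement's English description precedes it below -/
import Mathlib

section
/- Let (X, μ) be a finite measure space and (B_k)_{k∈ℕ} a sequence of measurable sets. Then μ(limsup_k B_k) ≥ limsup_{Q→∞} (∑_{k=1}^Q μ(B_k))² / (∑_{k,j=1}^Q μ(B_k ∩ B_j)), provided ∑_k μ(B_k) = ∞. -/
/-!
Cauchy–Schwarz applied to `∑_{k ∈ s} 1_{B k}`, which is supported on `⋃_{k ∈ s} B k`, gives
`(∑_{k ∈ s} μ (B k))² ≤ μ (⋃_{k ∈ s} B k) · ∑_{k, j ∈ s} μ (B k ∩ B j)`. For `s = [N + 1, Q]` the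
numerator over `[1, Q]` exceeds `(∑_{k ∈ s} μ (B k))²` only by a factor `((C + S_Q) / S_Q)²`, where
`C` is the finite sum of the first terms and `S_Q → ∞`, so the limsup of the ratio is at most
`μ (⋃_{k ≥ N} B k)` for every `N`. Continuity from above of the finite measure `μ` concludes.
-/

open MeasureTheory Filter ENNReal Topology Finset

theorem sq_lintegral_le_measure_univ_mul {X : Type*} [MeasurableSpace X] (μ : Measure X)
    {f : X → ℝ≥0∞} (hf : AEMeasurable f μ) :
    (∫⁻ x, f x ∂μ) ^ 2 ≤ μ Set.univ * ∫⁻ x, f x ^ 2 ∂μ := by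
  have holder := ENNReal.lintegral_mul_le_Lp_mul_Lq μ Real.HolderConjugate.two_two hf
    aemeasurable_const (g := 1)
  simp only [Pi.one_apply, mul_one, one_rpow, lintegral_const, one_mul] at holder
  calc (∫⁻ x, f x ∂μ) ^ 2
      ≤ ((∫⁻ x, f x ^ (2 : ℝ) ∂μ) ^ (1 / 2 : ℝ) * μ Set.univ ^ (1 / 2 : ℝ)) ^ 2 := by gcongr
    _ = μ Set.univ * ∫⁻ x, f x ^ 2 ∂μ := by
      simp only [mul_pow, ← rpow_mul_natCast, rpow_two]
      norm_num [mul_comm]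

theorem sq_lintegral_le_measure_mul_of_support_subset {X : Type*} [MeasurableSpace X]
    (μ : Measure X) {f : X → ℝ≥0∞} (hf : AEMeasurable f μ) {U : Set X}
    (hU : Function.support f ⊆ U) :
    (∫⁻ x, f x ∂μ) ^ 2 ≤ μ U * ∫⁻ x, f x ^ 2 ∂μ := by
  have hU2 : Function.support (fun x => f x ^ 2) ⊆ U := by
    intro x hx; exact hU (by simpa using hx)
  rw [← setLIntegral_eq_of_support_subset hU, ← setLIntegral_eq_of_support_subset hU2,
    ← Measure.restrict_apply_univ]
  exact sq_lintegral_le_measure_univ_mul _ hf.restrict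

theorem sq_sum_measure_le_measure_biUnion_mul {X ι : Type*} [MeasurableSpace X] (μ : Measure X)
    {B : ι → Set X} (hB : ∀ k, MeasurableSet (B k)) (s : Finset ι) :
    (∑ k ∈ s, μ (B k)) ^ 2 ≤ μ (⋃ k ∈ s, B k) * ∑ k ∈ s, ∑ j ∈ s, μ (B k ∩ B j) := by
  set f : X → ℝ≥0∞ := fun x => ∑ k ∈ s, (B k).indicator 1 x
  have hf_support : Function.support f ⊆ ⋃ k ∈ s, B k := by
    intro x hx
    obtain ⟨k, hk, hx⟩ := exists_ne_zero_of_sum_ne_zero hx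
    exact Set.mem_biUnion hk (Set.mem_of_indicator_ne_zero hx)
  have hf_sq : ∀ x, f x ^ 2 = ∑ k ∈ s, ∑ j ∈ s, (B k ∩ B j).indicator 1 x := by
    intro x
    simp only [f, sq, sum_mul_sum, Set.inter_indicator_one, Pi.mul_apply]
  have hf_int : ∫⁻ x, f x ∂μ = ∑ k ∈ s, μ (B k) := by
    rw [lintegral_finsetSum _ fun k _ => measurable_one.indicator (hB k)]
    simp only [lintegral_indicator_one (hB _)]
  have hf_sq_int : ∫⁻ x, f x ^ 2 ∂μ = ∑ k ∈ s, ∑ j ∈ s, μ (B k ∩ B j) := by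
    have hmeas k j : Measurable ((B k ∩ B j).indicator (1 : X → ℝ≥0∞)) :=
      measurable_one.indicator ((hB k).inter (hB j))
    simp only [hf_sq]
    rw [lintegral_finsetSum _ fun k _ => measurable_sum _ fun j _ => hmeas k j]
    refine sum_congr rfl fun k _ => ?_
    rw [lintegral_finsetSum _ fun j _ => hmeas k j]
    simp only [lintegral_indicator_one ((hB _).inter (hB _))]
  rw [← hf_int, ← hf_sq_int]
  exact sq_lintegral_le_measure_mul_of_support_subset μ
    (measurable_sum _ fun k _ => measurable_one.indicator (hB k)).aemeasurable hf_support

theorem ENNReal.tendsto_nhds_top_of_le_const_add {α : Type*} {l : Filter α} {f g : α → ℝ≥0∞}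
    {C : ℝ≥0∞} (hC : C ≠ ⊤) (hf : Tendsto f l (𝓝 ⊤)) (hfg : ∀ i, f i ≤ C + g i) :
    Tendsto g l (𝓝 ⊤) := by
  have hsub : Tendsto (fun i => f i - C) l (𝓝 ⊤) := by
    simpa [top_sub hC] using ENNReal.Tendsto.sub hf tendsto_const_nhds (Or.inr hC)
  exact tendsto_nhds_top_mono hsub (Eventually.of_forall fun i => tsub_le_iff_left.2 (hfg i))

theorem ENNReal.tendsto_const_add_div_self {α : Type*} {l : Filter α} {S : α → ℝ≥0∞}
    {C : ℝ≥0∞} (hC : C ≠ ⊤) (hS : Tendsto S l (𝓝 ⊤)) (hS_ne_top : ∀ i, S i ≠ ⊤) :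
    Tendsto (fun i => (C + S i) / S i) l (𝓝 1) := by
  have hCS : Tendsto (fun i => C / S i + 1) l (𝓝 1) := by
    simpa using (ENNReal.Tendsto.const_div hS (Or.inr hC)).add_const 1
  refine hCS.congr' ?_
  filter_upwards [hS.eventually_ne top_ne_zero] with i hi
  rw [ENNReal.add_div, ENNReal.div_self hi (hS_ne_top i)]

theorem limsup_sq_div_le_of_sq_le_mul {α : Type*} {l : Filter α} [l.NeBot] {a S D : α → ℝ≥0∞}
    {C m : ℝ≥0∞} (hC : C ≠ ⊤) (hS : Tendsto S l (𝓝 ⊤)) (hS_ne_top : ∀ i, S i ≠ ⊤)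
    (ha : ∀ i, a i ≤ C + S i) (hSD : ∀ i, S i ^ 2 ≤ m * D i) :
    limsup (fun i => a i ^ 2 / D i) l ≤ m := by
  have hbound : ∀ᶠ i in l, a i ^ 2 / D i ≤ ((C + S i) / S i) ^ 2 * m := by
    filter_upwards [hS.eventually_ne top_ne_zero] with i hi
    calc a i ^ 2 / D i ≤ (C + S i) ^ 2 / D i := by gcongr; exact ha i
      _ = ((C + S i) / S i) ^ 2 * (S i ^ 2 / D i) := by
        rw [← mul_div_assoc, ← mul_pow, ENNReal.div_mul_cancel hi (hS_ne_top i)]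
      _ ≤ ((C + S i) / S i) ^ 2 * m := by gcongr; exact ENNReal.div_le_of_le_mul (hSD i)
  have hlim : Tendsto (fun i => ((C + S i) / S i) ^ 2 * m) l (𝓝 m) := by
    have hsq := ENNReal.Tendsto.pow (n := 2) (ENNReal.tendsto_const_add_div_self hC hS hS_ne_top)
    simpa using ENNReal.Tendsto.mul_const hsq (Or.inl (by simp))
  exact (limsup_le_limsup hbound).trans hlim.limsup_eq.le

theorem limsup_sq_sum_div_le_measure_iUnion_ge {X : Type*} [MeasurableSpace X] (μ : Measure X)
    [IsFiniteMeasure μ] {B : ℕ → Set X} (hB : ∀ k, MeasurableSet (B k))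
    (hdiv : ∑' k, μ (B k) = ⊤) (N : ℕ) :
    atTop.limsup (fun Q : ℕ => (∑ k ∈ Icc 1 Q, μ (B k)) ^ 2 /
        ∑ k ∈ Icc 1 Q, ∑ j ∈ Icc 1 Q, μ (B k ∩ B j)) ≤ μ (⋃ k ≥ N, B k) := by
  set C := ∑ k ∈ range (N + 1), μ (B k)
  set S := fun Q => ∑ k ∈ Icc (N + 1) Q, μ (B k)
  have hsum_ne_top : ∀ s : Finset ℕ, ∑ k ∈ s, μ (B k) ≠ ⊤ :=
    fun s => ENNReal.sum_ne_top.2 fun k _ => measure_ne_top μ _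
  have hhead_tail : ∀ Q, ∀ s ⊆ range (Q + 1), ∑ k ∈ s, μ (B k) ≤ C + S Q := by
    intro Q s hs
    calc ∑ k ∈ s, μ (B k) ≤ ∑ k ∈ range (N + 1) ∪ Icc (N + 1) Q, μ (B k) := by
          refine sum_le_sum_of_subset fun k hk => ?_
          have := hs hk
          simp only [mem_range, mem_union, mem_Icc] at this ⊢
          omega
      _ ≤ C + S Q := le_self_add.trans_eq (sum_union_inter)
  have hpartial : Tendsto (fun Q => ∑ k ∈ range (Q + 1), μ (B k)) atTop (𝓝 ⊤) :=
    (hdiv ▸ ENNReal.tendsto_nat_tsum _).comp (tendsto_add_atTop_nat 1)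
  refine limsup_sq_div_le_of_sq_le_mul (hsum_ne_top _)
    (ENNReal.tendsto_nhds_top_of_le_const_add (hsum_ne_top _) hpartial
      fun Q => hhead_tail Q _ subset_rfl)
    (fun Q => hsum_ne_top _) (fun Q => hhead_tail Q _ fun k hk => ?_) fun Q => ?_
  · simp only [mem_Icc, mem_range] at hk ⊢
    omega
  · have hsub : Icc (N + 1) Q ⊆ Icc 1 Q := Icc_subset_Icc_left (by omega)
    calc S Q ^ 2 ≤ μ (⋃ k ∈ Icc (N + 1) Q, B k) *
          ∑ k ∈ Icc (N + 1) Q, ∑ j ∈ Icc (N + 1) Q, μ (B k ∩ B j) :=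
          sq_sum_measure_le_measure_biUnion_mul μ hB _
      _ ≤ μ (⋃ k ≥ N, B k) * ∑ k ∈ Icc 1 Q, ∑ j ∈ Icc 1 Q, μ (B k ∩ B j) := by
          refine mul_le_mul' (measure_mono fun x hx => ?_) ?_
          · simp only [Set.mem_iUnion, mem_Icc] at hx ⊢
            obtain ⟨k, hk, hx⟩ := hx
            exact ⟨k, by omega, hx⟩
          · exact (sum_le_sum fun k _ => sum_le_sum_of_subset hsub).trans
              (sum_le_sum_of_subset hsub)

theorem stmt2 {X : Type*} [MeasurableSpace X] (μ : Measure X) [IsFiniteMeasure μ]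
    (B : ℕ → Set X) (hB : ∀ k, MeasurableSet (B k))
    (hdiv : ∑' k, μ (B k) = ⊤) :
    Filter.atTop.limsup (fun Q : ℕ =>
        (∑ k ∈ Finset.Icc 1 Q, μ (B k)) ^ 2 /
          ∑ k ∈ Finset.Icc 1 Q, ∑ j ∈ Finset.Icc 1 Q, μ (B k ∩ B j)) ≤
      μ (Filter.limsup B Filter.atTop) := by
  have hanti : Antitone fun N => ⋃ k ≥ N, B k := fun M N hMN =>
    Set.biUnion_subset_biUnion_left fun k hk => le_trans hMN hk
  rw [limsup_eq_iInf_iSup_of_nat (u := B)]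
  simp only [Set.iSup_eq_iUnion, Set.iInf_eq_iInter]
  rw [hanti.measure_iInter (fun N => .iUnion fun k => .iUnion fun _ => (hB k).nullMeasurableSet)
    ⟨0, measure_ne_top μ _⟩]
  exact le_iInf (limsup_sq_sum_div_le_measure_iUnion_ge μ hB hdiv)
end

section
/- Let m ≥ 1 and for δ ≥ 0 let U(δ) = (-δ,δ)^m ⊂ ℝ^m. Then for all a, b ≥ 0, the sum over nonzero j ∈ ℤ^m of the Lebesgue measure of U(a) ∩ (U(b) + j) is at most C·(ab)^m for a constant C depending only on m. -/
open MeasureTheory Set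

/-!
The overlap `U(a) ∩ (U(b) + j)` is empty unless every coordinate of `j` has absolute value
below `a + b`, and it lies in a cube of side `2 min a b`. If `a + b ≤ 1` no nonzero `j`
contributes; otherwise at most `(2⌊a + b⌋ + 1)^m ≤ (3(a + b))^m` translates do, and
`(a + b) min a b ≤ 2ab`.
-/

section Cubes

variable {ι : Type*}

theorem cube_inter_cube_eq_empty {a b : ℝ} {c : ι → ℝ} {i : ι} (hi : a + b ≤ |c i|) :
    {x : ι → ℝ | (∀ i, |x i| < a) ∧ ∀ i, |x i - c i| < b} = ∅ := by
  refine eq_empty_of_forall_notMem fun x ⟨hxa, hxb⟩ => ?_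
  linarith [hxa i, hxb i, abs_sub_comm (x i) (c i), abs_sub_abs_le_abs_sub (c i) (x i)]

variable [Fintype ι]

theorem volume_setOf_forall_abs_sub_lt (c : ι → ℝ) (r : ℝ) :
    volume {x : ι → ℝ | ∀ i, |x i - c i| < r} = ENNReal.ofReal (2 * r) ^ Fintype.card ι := by
  have hcube : {x : ι → ℝ | ∀ i, |x i - c i| < r} = univ.pi fun i => Ioo (c i - r) (c i + r) := by
    ext x
    simp only [mem_ofPred_eq, mem_pi, mem_univ, true_implies, ← Real.ball_eq_Ioo, Metric.mem_ball,
      Real.dist_eq]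
  simp only [hcube, volume_pi_pi, Real.volume_Ioo, add_sub_sub_cancel, ← two_mul,
    Finset.prod_const, Finset.card_univ]

theorem volume_cube_inter_cube_le (a b : ℝ) (c : ι → ℝ) :
    volume {x : ι → ℝ | (∀ i, |x i| < a) ∧ ∀ i, |x i - c i| < b} ≤
      ENNReal.ofReal (2 * min a b) ^ Fintype.card ι := by
  have hmono : Monotone fun r : ℝ => ENNReal.ofReal (2 * r) ^ Fintype.card ι := fun _ _ hrs =>
    pow_le_pow_left₀ zero_le (ENNReal.ofReal_le_ofReal (by linarith)) _
  calc _ ≤ min (volume {x : ι → ℝ | ∀ i, |x i - 0| < a}) (volume {x : ι → ℝ | ∀ i, |x i - c i| < b}) :=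
        le_min (measure_mono fun x hx i => by simpa using hx.1 i) (measure_mono fun x hx => hx.2)
    _ = _ := by
      rw [volume_setOf_forall_abs_sub_lt, volume_setOf_forall_abs_sub_lt, hmono.map_min]

theorem exists_lt_abs_of_notMem_piFinset_Icc_floor [DecidableEq ι] {r : ℝ} {j : ι → ℤ}
    (hj : j ∉ Fintype.piFinset fun _ => Finset.Icc (-(⌊r⌋₊ : ℤ)) ⌊r⌋₊) : ∃ i, r < |(j i : ℝ)| := by
  obtain ⟨i, hi⟩ := not_forall.mp (Fintype.mem_piFinset.not.mp hj)
  have hfloor : (⌊r⌋₊ : ℤ) + 1 ≤ |j i| := by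
    rw [Finset.mem_Icc] at hi
    rcases abs_cases (j i) with ⟨he, _⟩ | ⟨he, _⟩ <;> omega
  refine ⟨i, (Nat.lt_floor_add_one r).trans_le ?_⟩
  rw [← Int.cast_abs]
  exact_mod_cast hfloor

theorem tsum_volume_cube_inter_cube_le (a b : ℝ) :
    ∑' j : ι → ℤ, volume {x : ι → ℝ | (∀ i, |x i| < a) ∧ ∀ i, |x i - (j i : ℝ)| < b} ≤
      ENNReal.ofReal ((2 * ⌊a + b⌋₊ + 1) * (2 * min a b)) ^ Fintype.card ι := by
  classical
  set S : Finset (ι → ℤ) := Fintype.piFinset fun _ => Finset.Icc (-(⌊a + b⌋₊ : ℤ)) ⌊a + b⌋₊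
  have hS : S.card = (2 * ⌊a + b⌋₊ + 1) ^ Fintype.card ι := by
    rw [Fintype.card_piFinset, Int.card_Icc, Finset.prod_const, Finset.card_univ]
    congr 1
    omega
  rw [tsum_eq_sum fun j hj => by
    obtain ⟨i, hi⟩ := exists_lt_abs_of_notMem_piFinset_Icc_floor (r := a + b) hj
    simp only [cube_inter_cube_eq_empty (c := fun i => (j i : ℝ)) hi.le, measure_empty]]
  calc _ ≤ ∑ _j ∈ S, ENNReal.ofReal (2 * min a b) ^ Fintype.card ι :=
        Finset.sum_le_sum fun j _ => volume_cube_inter_cube_le a b _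
    _ = _ := by
      rw [Finset.sum_const, nsmul_eq_mul, hS,
        ENNReal.ofReal_mul (by positivity : (0 : ℝ) ≤ 2 * ⌊a + b⌋₊ + 1), mul_pow]
      congr 1
      exact_mod_cast (ENNReal.ofReal_natCast ((2 * ⌊a + b⌋₊ + 1) ^ Fintype.card ι)).symm

end Cubes

theorem two_floor_add_one_mul_two_min_le {a b : ℝ} (ha : 0 ≤ a) (hb : 0 ≤ b) (hab : 1 < a + b) :
    (2 * ⌊a + b⌋₊ + 1) * (2 * min a b) ≤ 12 * (a * b) := by
  have hfloor : (⌊a + b⌋₊ : ℝ) ≤ a + b := Nat.floor_le (by linarith)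
  have hsum : a + b ≤ 2 * max a b := by
    rcases le_total a b with h | h <;> simp [h] <;> linarith
  nlinarith [min_mul_max a b, le_min ha hb]

theorem stmt3_general (m : ℕ) :
    ∃ C : ℝ, 0 < C ∧ ∀ a b : ℝ, 0 ≤ a → 0 ≤ b →
      ∑' j : {j : Fin m → ℤ // j ≠ 0},
          volume {x : Fin m → ℝ | (∀ i, |x i| < a) ∧ ∀ i, |x i - (j.1 i : ℝ)| < b} ≤
        ENNReal.ofReal (C * (a * b) ^ m) := by
  refine ⟨12 ^ m, by positivity, fun a b ha hb => ?_⟩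
  rcases le_or_gt (a + b) 1 with hab | hab
  · refine le_of_eq_of_le (ENNReal.tsum_eq_zero.mpr fun ⟨j, hj⟩ => ?_) zero_le
    obtain ⟨i, hi⟩ := Function.ne_iff.mp hj
    have hji : (1 : ℝ) ≤ |(j i : ℝ)| := by
      rw [← Int.cast_abs]
      exact_mod_cast Int.one_le_abs hi
    simp only [cube_inter_cube_eq_empty (c := fun i => (j i : ℝ)) (hab.trans hji), measure_empty]
  · calc _ ≤ _ := ENNReal.tsum_comp_le_tsum_of_injective Subtype.val_injective _
      _ ≤ _ := tsum_volume_cube_inter_cube_le a b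
      _ ≤ _ := by
        rw [Fintype.card_fin, ← ENNReal.ofReal_pow (by positivity), ← mul_pow]
        exact ENNReal.ofReal_le_ofReal <|
          pow_le_pow_left₀ (by positivity) (two_floor_add_one_mul_two_min_le ha hb hab) m

theorem stmt3 (m : ℕ) (hm : 1 ≤ m) :
    ∃ C : ℝ, 0 < C ∧ ∀ a b : ℝ, 0 ≤ a → 0 ≤ b →
      ∑' j : {j : Fin m → ℤ // j ≠ 0},
          volume {x : Fin m → ℝ | (∀ i, |x i| < a) ∧ ∀ i, |x i - (j.1 i : ℝ)| < b} ≤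
        ENNReal.ofReal (C * (a * b) ^ m) :=
  stmt3_general m
end

section
/- Let m ≥ 1, a ∈ ℤ^m, b ∈ ℕ with gcd(a,b) = 1, and y = a/b ∈ ℚ^m. For an integer q ≥ 1, an integer r with 1 ≤ |r| < q, and δ₁, δ₂ ∈ [0, 1/2), let A''(q,δ₁) be the set of x ∈ [0,1)^m with |qx - p - y| < δ₁ for some p ∈ ℤ^m satisfying gcd(q, bp+a) = 1, and let A(r,δ₂) be the set of x ∈ [0,1)^m with |rx - s - y| < δ₂ for some s ∈ ℤ^m. Then |A''(q,δ₁) ∩ A(r,δ₂)| ≤ C·(b δ₁ δ₂)^m for a constant C depending only on m. -/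
/-!
For x in the intersection, with witnesses p and s and y = a / b, the integers
t_i = q(b s_i + a_i) - r(b p_i + a_i) = b (r(q x_i - p_i - y_i) - q(r x_i - s_i - y_i))
satisfy |t_i| ≤ b(|r|δ₁ + qδ₂) and are divisible by gcd(q, r). Since q is coprime to
gcd_i(b p_i + a_i) but does not divide r, some t_i is nonzero, so a nonempty intersection forces
gcd(q, r) ≤ b(|r|δ₁ + qδ₂).

Dropping the coprimality condition, the intersection lies in a product of one-dimensional sets,
each covered by the intervals {z : |qz - p - y| < δ₁, |rz - s - y| < δ₂}, of length at most
min(2δ₁/q, 2δ₂/|r|). For the pairs (p, s) that occur, n = qs - rp is a multiple of gcd(q, r)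
within |r|δ₁ + qδ₂ of (r - q)y, and for fixed n the s are congruent modulo r / gcd(q, r)
and lie in a window of length |r| + 1. So there are O(|r|δ₁ + qδ₂ + gcd(q, r)) intervals,
which by the bound on gcd(q, r) is O(b(|r|δ₁ + qδ₂)), and each coordinate contributes
O(b δ₁ δ₂).
-/

open MeasureTheory Set

theorem Int.div_gcd_dvd_of_mul_eq_mul {q r u v : ℤ} (hr : r ≠ 0) (h : q * u = r * v) :
    r / q.gcd r ∣ u := by
  have hg : 0 < q.gcd r := Int.gcd_pos_of_ne_zero_right q hr
  have hcop : IsCoprime (r / q.gcd r) (q / q.gcd r) := by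
    rw [Int.isCoprime_iff_gcd_eq_one, Int.gcd_comm]; exact Int.gcd_div_gcd_div_gcd hg
  refine hcop.dvd_of_dvd_mul_left ⟨v, mul_left_cancel₀ (Int.natCast_ne_zero.mpr hg.ne') ?_⟩
  rw [← mul_assoc, ← mul_assoc, Int.mul_ediv_cancel' (Int.gcd_dvd_left q r),
    Int.mul_ediv_cancel' (Int.gcd_dvd_right q r), h]

theorem Int.dvd_of_forall_dvd_mul {ι : Type*} (s : Finset ι) (v : ι → ℤ) {q r : ℤ}
    (hcop : GCDMonoid.gcd q (s.gcd v) = 1) (h : ∀ i ∈ s, q ∣ r * v i) : q ∣ r := by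
  have hdvd : q ∣ s.gcd fun i => r * v i := Finset.dvd_gcd h
  rw [Finset.gcd_mul_left, ← Int.abs_eq_normalize] at hdvd
  rw [← Int.coe_gcd, Nat.cast_eq_one, ← Int.isCoprime_iff_gcd_eq_one] at hcop
  exact (dvd_abs q r).mp (hcop.dvd_of_dvd_mul_right hdvd)

theorem Int.card_le_of_dvd_sub_of_abs_sub_le {T : Finset ℤ} {d : ℤ} (hd : d ≠ 0) {ℓ : ℝ}
    (hℓ : 0 ≤ ℓ) (hdvd : ∀ x ∈ T, ∀ x' ∈ T, d ∣ x - x')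
    (hle : ∀ x ∈ T, ∀ x' ∈ T, |(x - x' : ℝ)| ≤ ℓ) :
    (T.card : ℝ) ≤ 2 * ℓ / |(d : ℝ)| + 1 := by
  rcases T.eq_empty_or_nonempty with rfl | ⟨x₀, hx₀⟩
  · simp only [Finset.card_empty, Nat.cast_zero]; positivity
  have hd' : (0 : ℝ) < |(d : ℝ)| := by positivity
  set N := ⌊ℓ / |(d : ℝ)|⌋
  have hT : T ⊆ (Finset.Icc (-N) N).image (fun k => x₀ + d * k) := by
    intro x hx
    obtain ⟨k, hk⟩ := hdvd x hx x₀ hx₀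
    have hkN : |(k : ℝ)| ≤ ℓ / |(d : ℝ)| := by
      rw [le_div_iff₀ hd', mul_comm, ← abs_mul, ← Int.cast_mul, ← hk, Int.cast_sub]
      exact hle x hx x₀ hx₀
    have : |k| ≤ N := Int.le_floor.mpr (by exact_mod_cast hkN)
    exact Finset.mem_image.mpr ⟨k, Finset.mem_Icc.mpr (abs_le.mp this), by omega⟩
  have hN : (0 : ℤ) ≤ N := Int.floor_nonneg.mpr (by positivity)
  calc (T.card : ℝ) ≤ (Finset.Icc (-N) N).card := by
        exact_mod_cast (Finset.card_le_card hT).trans Finset.card_image_le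
    _ = 2 * N + 1 := by
        rw [Int.card_Icc, show N + 1 - -N = 2 * N + 1 by ring]
        exact_mod_cast Int.toNat_of_nonneg (by omega)
    _ ≤ 2 * ℓ / |(d : ℝ)| + 1 := by
        have := Int.floor_le (ℓ / |(d : ℝ)|)
        rw [mul_div_assoc]; linarith

theorem abs_mul_add_sub_mul_add_le {q r x p s y δ₁ δ₂ : ℝ} (hp : |q * x - p - y| ≤ δ₁)
    (hs : |r * x - s - y| ≤ δ₂) : |q * (s + y) - r * (p + y)| ≤ |r| * δ₁ + |q| * δ₂ :=
  calc |q * (s + y) - r * (p + y)| = |r * (q * x - p - y) - q * (r * x - s - y)| := by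
        ring_nf
    _ ≤ |r * (q * x - p - y)| + |q * (r * x - s - y)| := abs_sub _ _
    _ ≤ |r| * δ₁ + |q| * δ₂ := by rw [abs_mul, abs_mul]; gcongr

theorem abs_sub_le_of_abs_mul_sub_lt {r z z' s s' y δ : ℝ} (hz : z ∈ Ico (0 : ℝ) 1)
    (hz' : z' ∈ Ico (0 : ℝ) 1) (hs : |r * z - s - y| < δ) (hs' : |r * z' - s' - y| < δ) :
    |s - s'| ≤ |r| + 2 * δ := by
  have hzz : |z - z'| ≤ 1 := abs_le.mpr ⟨by linarith [hz.1, hz'.2], by linarith [hz.2, hz'.1]⟩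
  calc |s - s'| = |r * (z - z') - (r * z - s - y) + (r * z' - s' - y)| := by ring_nf
    _ ≤ |r * (z - z') - (r * z - s - y)| + |r * z' - s' - y| := abs_add_le _ _
    _ ≤ |r * (z - z')| + |r * z - s - y| + |r * z' - s' - y| := by
          gcongr ?_ + _; exact abs_sub _ _
    _ ≤ |r| * 1 + δ + δ := by rw [abs_mul]; gcongr
    _ = |r| + 2 * δ := by ring

theorem abs_le_of_abs_mul_sub_sub_lt {c z k y δ : ℝ} (hz : z ∈ Ico (0 : ℝ) 1)
    (h : |c * z - k - y| < δ) : |k| ≤ |c| + |y| + δ := by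
  have hcz : |c * z| ≤ |c| := by
    rw [abs_mul]
    exact mul_le_of_le_one_right (abs_nonneg c) (abs_le.mpr ⟨by linarith [hz.1], hz.2.le⟩)
  calc |k| = |c * z - y - (c * z - k - y)| := by ring_nf
    _ ≤ |c * z - y| + |c * z - k - y| := abs_sub _ _
    _ ≤ |c * z| + |y| + δ := add_le_add (abs_sub _ _) h.le
    _ ≤ |c| + |y| + δ := by gcongr

theorem Real.volume_abs_mul_sub_lt {c : ℝ} (hc : c ≠ 0) (w δ : ℝ) :
    volume {z : ℝ | |c * z - w| < δ} = ENNReal.ofReal (2 * δ / |c|) := by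
  have : {z : ℝ | |c * z - w| < δ} = (c * ·) ⁻¹' Metric.ball w δ := by
    ext z; simp [Real.dist_eq]
  rw [this, Real.volume_preimage_mul_left hc, Real.volume_ball,
    ← ENNReal.ofReal_mul (abs_nonneg _), abs_inv, inv_mul_eq_div]

section JointApprox

variable (q r : ℤ) (y δ₁ δ₂ : ℝ)

def jointApproxPairs : Set (ℤ × ℤ) :=
  {ps | ∃ z ∈ Ico (0 : ℝ) 1, |q * z - ps.1 - y| < δ₁ ∧ |r * z - ps.2 - y| < δ₂}

def jointApproxSet : Set ℝ :=
  {z | z ∈ Ico (0 : ℝ) 1 ∧ ∃ p s : ℤ, |q * z - p - y| < δ₁ ∧ |r * z - s - y| < δ₂}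

theorem jointApproxPairs_finite : (jointApproxPairs q r y δ₁ δ₂).Finite := by
  set M := ⌈|(q : ℝ)| + |(r : ℝ)| + |y| + δ₁ + δ₂⌉
  refine ((Set.finite_Icc (-M) M).prod (Set.finite_Icc (-M) M)).subset ?_
  rintro ⟨p, s⟩ ⟨z, hz, hp, hs⟩
  have hp' := abs_le_of_abs_mul_sub_sub_lt hz hp
  have hs' := abs_le_of_abs_mul_sub_sub_lt hz hs
  have hM := Int.le_ceil (|(q : ℝ)| + |(r : ℝ)| + |y| + δ₁ + δ₂)
  have hδ₁ : 0 ≤ δ₁ := (abs_nonneg _).trans hp.le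
  have hδ₂ : 0 ≤ δ₂ := (abs_nonneg _).trans hs.le
  have hpM : ((|p| : ℤ) : ℝ) ≤ M := by push_cast; linarith [abs_nonneg (r : ℝ)]
  have hsM : ((|s| : ℤ) : ℝ) ≤ M := by push_cast; linarith [abs_nonneg (q : ℝ)]
  exact ⟨abs_le.mp (Int.cast_le.mp hpM), abs_le.mp (Int.cast_le.mp hsM)⟩

variable {q r y δ₁ δ₂}

theorem card_jointApproxPairs_fiber_le (hr : r ≠ 0) (hδ₂ : 0 ≤ δ₂) (hδ₂' : δ₂ ≤ 1 / 2)
    (n : ℤ) :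
    ((jointApproxPairs_finite q r y δ₁ δ₂).toFinset.filter
      (fun ps => q * ps.2 - r * ps.1 = n)).card ≤ 5 * q.gcd r := by
  set Fn := (jointApproxPairs_finite q r y δ₁ δ₂).toFinset.filter
    (fun ps => q * ps.2 - r * ps.1 = n)
  have hmem : ∀ ps ∈ Fn, ps ∈ jointApproxPairs q r y δ₁ δ₂ ∧ q * ps.2 - r * ps.1 = n := by
    intro ps hps; simpa [Fn] using hps
  have hinj : InjOn Prod.snd (Fn : Set (ℤ × ℤ)) := by
    rintro ⟨p, s⟩ hps ⟨p', s'⟩ hps' (rfl : s = s')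
    have h := (hmem _ hps).2.trans (hmem _ hps').2.symm
    simp only [sub_right_inj, mul_right_inj' hr] at h
    rw [h]
  have hg : (1 : ℝ) ≤ q.gcd r := by exact_mod_cast Int.gcd_pos_of_ne_zero_right q hr
  have hr1 : (1 : ℝ) ≤ |(r : ℝ)| := by exact_mod_cast Int.one_le_abs hr
  have hd : |((r / q.gcd r : ℤ) : ℝ)| = |(r : ℝ)| / q.gcd r := by
    rw [Int.cast_div (Int.gcd_dvd_right q r) (by positivity), abs_div]; simp
  have hcard := Int.card_le_of_dvd_sub_of_abs_sub_le (T := Fn.image Prod.snd)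
    (d := r / q.gcd r) (ℓ := |(r : ℝ)| + 2 * δ₂)
    (fun h => hr (by rw [← Int.mul_ediv_cancel' (Int.gcd_dvd_right q r), h, mul_zero]))
    (by positivity) ?_ ?_
  · rw [Finset.card_image_of_injOn hinj, hd] at hcard
    have : 2 * (|(r : ℝ)| + 2 * δ₂) / (|(r : ℝ)| / q.gcd r) + 1 ≤ 5 * q.gcd r := by
      have : 2 * (|(r : ℝ)| + 2 * δ₂) * q.gcd r / |(r : ℝ)| ≤ 4 * q.gcd r := by
        rw [div_le_iff₀ (by positivity)]; nlinarith
      rw [div_div_eq_mul_div]; linarith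
    exact_mod_cast hcard.trans this
  · simp only [Finset.mem_image]
    rintro _ ⟨⟨p, s⟩, hps, rfl⟩ _ ⟨⟨p', s'⟩, hps', rfl⟩
    refine Int.div_gcd_dvd_of_mul_eq_mul hr (v := p - p') ?_
    linear_combination (hmem _ hps).2 - (hmem _ hps').2
  · simp only [Finset.mem_image]
    rintro _ ⟨⟨p, s⟩, hps, rfl⟩ _ ⟨⟨p', s'⟩, hps', rfl⟩
    obtain ⟨z, hz, -, hs⟩ := (hmem _ hps).1
    obtain ⟨z', hz', -, hs'⟩ := (hmem _ hps').1
    exact abs_sub_le_of_abs_mul_sub_lt hz hz' hs hs'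

theorem card_image_jointApproxPairs_le (hr : r ≠ 0) (hδ₁ : 0 ≤ δ₁) (hδ₂ : 0 ≤ δ₂) :
    (((jointApproxPairs_finite q r y δ₁ δ₂).toFinset.image
      (fun ps => q * ps.2 - r * ps.1)).card : ℝ) ≤
      4 * (|(r : ℝ)| * δ₁ + |(q : ℝ)| * δ₂) / q.gcd r + 1 := by
  have hcard := Int.card_le_of_dvd_sub_of_abs_sub_le
    (T := (jointApproxPairs_finite q r y δ₁ δ₂).toFinset.image
      (fun ps => q * ps.2 - r * ps.1))
    (d := q.gcd r) (ℓ := 2 * (|(r : ℝ)| * δ₁ + |(q : ℝ)| * δ₂))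
    (by exact_mod_cast (Int.gcd_pos_of_ne_zero_right q hr).ne') (by positivity) ?_ ?_
  · rwa [Int.cast_natCast, Nat.abs_cast, ← mul_assoc, show (2 : ℝ) * 2 = 4 by norm_num]
      at hcard
  · simp only [Finset.mem_image, Set.Finite.mem_toFinset]
    rintro _ ⟨⟨p, s⟩, -, rfl⟩ _ ⟨⟨p', s'⟩, -, rfl⟩
    have hq := Int.gcd_dvd_left q r
    have hr := Int.gcd_dvd_right q r
    exact dvd_sub (dvd_sub (hq.mul_right _) (hr.mul_right _))
      (dvd_sub (hq.mul_right _) (hr.mul_right _))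
  · simp only [Finset.mem_image, Set.Finite.mem_toFinset]
    rintro _ ⟨⟨p, s⟩, ⟨z, -, hp, hs⟩, rfl⟩ _ ⟨⟨p', s'⟩, ⟨z', -, hp', hs'⟩, rfl⟩
    have h := abs_mul_add_sub_mul_add_le hp.le hs.le
    have h' := abs_mul_add_sub_mul_add_le hp'.le hs'.le
    calc |((q * s - r * p : ℤ) : ℝ) - ((q * s' - r * p' : ℤ) : ℝ)|
        = |(q * (s + y) - r * (p + y)) - (q * (s' + y) - r * (p' + y))| := by push_cast; ring_nf
      _ ≤ |(q * (s + y) - r * (p + y) : ℝ)| + |(q * (s' + y) - r * (p' + y) : ℝ)| :=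
          abs_sub _ _
      _ ≤ 2 * (|(r : ℝ)| * δ₁ + |(q : ℝ)| * δ₂) := by linarith

theorem card_jointApproxPairs_le (hr : r ≠ 0) (hδ₁ : 0 ≤ δ₁) (hδ₂ : 0 ≤ δ₂)
    (hδ₂' : δ₂ ≤ 1 / 2) :
    ((jointApproxPairs_finite q r y δ₁ δ₂).toFinset.card : ℝ) ≤
      20 * (|(r : ℝ)| * δ₁ + |(q : ℝ)| * δ₂) + 5 * q.gcd r := by
  have hg : (0 : ℝ) < q.gcd r := by exact_mod_cast Int.gcd_pos_of_ne_zero_right q hr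
  have hcard := Finset.card_le_mul_card_image _ _
    fun n _ => card_jointApproxPairs_fiber_le (q := q) (y := y) (δ₁ := δ₁) hr hδ₂ hδ₂' n
  calc ((jointApproxPairs_finite q r y δ₁ δ₂).toFinset.card : ℝ)
      ≤ 5 * q.gcd r * (4 * (|(r : ℝ)| * δ₁ + |(q : ℝ)| * δ₂) / q.gcd r + 1) := by
        refine (Nat.cast_le.mpr hcard).trans ?_
        push_cast
        gcongr
        exact card_image_jointApproxPairs_le hr hδ₁ hδ₂
    _ = 20 * (|(r : ℝ)| * δ₁ + |(q : ℝ)| * δ₂) + 5 * q.gcd r := by field_simp; ring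

theorem volume_jointApproxSet_le (hq : q ≠ 0) (hr : r ≠ 0) (hδ₁ : 0 ≤ δ₁)
    (hδ₂ : 0 ≤ δ₂) (hδ₂' : δ₂ ≤ 1 / 2) :
    volume (jointApproxSet q r y δ₁ δ₂) ≤ ENNReal.ofReal
      ((20 * (|(r : ℝ)| * δ₁ + |(q : ℝ)| * δ₂) + 5 * q.gcd r) *
        min (2 * δ₁ / |(q : ℝ)|) (2 * δ₂ / |(r : ℝ)|)) := by
  set F := (jointApproxPairs_finite q r y δ₁ δ₂).toFinset
  set I : ℤ × ℤ → Set ℝ := fun ps => {z | |q * z - ps.1 - y| < δ₁ ∧ |r * z - ps.2 - y| < δ₂}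
  have hcover : jointApproxSet q r y δ₁ δ₂ ⊆ ⋃ ps ∈ F, I ps := by
    rintro z ⟨hz, p, s, hp, hs⟩
    exact mem_biUnion (x := (p, s)) (by simpa [F] using ⟨z, hz, hp, hs⟩) ⟨hp, hs⟩
  set L := min (2 * δ₁ / |(q : ℝ)|) (2 * δ₂ / |(r : ℝ)|)
  have hI : ∀ ps, volume (I ps) ≤ ENNReal.ofReal L := by
    intro ps
    rw [ENNReal.ofReal_min, ← Real.volume_abs_mul_sub_lt (by exact_mod_cast hq) (ps.1 + y),
      ← Real.volume_abs_mul_sub_lt (by exact_mod_cast hr) (ps.2 + y)]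
    exact le_min (measure_mono fun z hz => by simpa [sub_sub] using hz.1)
      (measure_mono fun z hz => by simpa [sub_sub] using hz.2)
  calc volume (jointApproxSet q r y δ₁ δ₂) ≤ ∑ ps ∈ F, volume (I ps) :=
        (measure_mono hcover).trans (measure_biUnion_finset_le F I)
    _ ≤ ∑ _ps ∈ F, ENNReal.ofReal L :=
        Finset.sum_le_sum fun ps _ => hI ps
    _ ≤ _ := by
        rw [Finset.sum_const, nsmul_eq_mul, ENNReal.ofReal_mul (by positivity),
          ← ENNReal.ofReal_natCast]
        gcongr
        exact card_jointApproxPairs_le hr hδ₁ hδ₂ hδ₂'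

theorem volume_jointApproxSet_le_of_gcd_le (hq : q ≠ 0) (hr : r ≠ 0) (hδ₁ : 0 ≤ δ₁)
    (hδ₂ : 0 ≤ δ₂) (hδ₂' : δ₂ ≤ 1 / 2) {b : ℝ} (hb : 1 ≤ b)
    (hgcd : (q.gcd r : ℝ) ≤ b * (|(r : ℝ)| * δ₁ + |(q : ℝ)| * δ₂)) :
    volume (jointApproxSet q r y δ₁ δ₂) ≤ ENNReal.ofReal (100 * b * δ₁ * δ₂) := by
  refine (volume_jointApproxSet_le hq hr hδ₁ hδ₂ hδ₂').trans (ENNReal.ofReal_le_ofReal ?_)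
  set L := min (2 * δ₁ / |(q : ℝ)|) (2 * δ₂ / |(r : ℝ)|)
  have hL : 0 ≤ L := le_min (by positivity) (by positivity)
  have hrL : |(r : ℝ)| * δ₁ * L ≤ 2 * δ₁ * δ₂ := by
    calc |(r : ℝ)| * δ₁ * L ≤ |(r : ℝ)| * δ₁ * (2 * δ₂ / |(r : ℝ)|) := by
          gcongr; exact min_le_right _ _
      _ = 2 * δ₁ * δ₂ := by field_simp
  have hqL : |(q : ℝ)| * δ₂ * L ≤ 2 * δ₁ * δ₂ := by
    calc |(q : ℝ)| * δ₂ * L ≤ |(q : ℝ)| * δ₂ * (2 * δ₁ / |(q : ℝ)|) := by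
          gcongr; exact min_le_left _ _
      _ = 2 * δ₁ * δ₂ := by field_simp
  calc (20 * (|(r : ℝ)| * δ₁ + |(q : ℝ)| * δ₂) + 5 * q.gcd r) * L
      ≤ 25 * b * (|(r : ℝ)| * δ₁ * L + |(q : ℝ)| * δ₂ * L) := by
        have hB : 0 ≤ |(r : ℝ)| * δ₁ + |(q : ℝ)| * δ₂ := by positivity
        nlinarith [mul_le_mul_of_nonneg_right hgcd hL,
          mul_nonneg (mul_nonneg (sub_nonneg.mpr hb) hB) hL]
    _ ≤ 100 * b * δ₁ * δ₂ := by nlinarith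

end JointApprox

theorem Int.gcd_le_of_approx {ι : Type*} [Fintype ι] {a : ι → ℤ} {b : ℕ} (hb : 1 ≤ b)
    {q r : ℤ} (hr : r ≠ 0) (hrq : |r| < q) {δ₁ δ₂ : ℝ} {x : ι → ℝ} {p s : ι → ℤ}
    (hp : ∀ i, |(q : ℝ) * x i - p i - a i / b| < δ₁)
    (hs : ∀ i, |(r : ℝ) * x i - s i - a i / b| < δ₂)
    (hcop : GCDMonoid.gcd q (Finset.univ.gcd fun i => (b : ℤ) * p i + a i) = 1) :
    (q.gcd r : ℝ) ≤ b * (|(r : ℝ)| * δ₁ + |(q : ℝ)| * δ₂) := by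
  have hndvd : ¬ q ∣ r := fun h =>
    (Int.le_of_dvd (abs_pos.mpr hr) ((dvd_abs _ _).mpr h)).not_gt hrq
  obtain ⟨i, hi⟩ : ∃ i, ¬ q ∣ r * (b * p i + a i) := by
    by_contra! h
    exact hndvd (Int.dvd_of_forall_dvd_mul _ _ hcop fun i _ => h i)
  set t := q * (b * s i + a i) - r * (b * p i + a i)
  have ht : t ≠ 0 := fun h => hi ⟨b * s i + a i, by linear_combination -h⟩
  have hdvd : (q.gcd r : ℤ) ∣ t :=
    dvd_sub ((Int.gcd_dvd_left q r).mul_right _) ((Int.gcd_dvd_right q r).mul_right _)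
  have hle : (q.gcd r : ℤ) ≤ |t| := Int.le_of_dvd (abs_pos.mpr ht) ((dvd_abs _ _).mpr hdvd)
  have hbR : (0 : ℝ) < b := by exact_mod_cast hb
  have htR : (t : ℝ) = b * (q * (s i + a i / b) - r * (p i + a i / b)) := by
    simp only [t]; push_cast; field_simp
  calc (q.gcd r : ℝ) ≤ |(t : ℝ)| := by exact_mod_cast hle
    _ = b * |(q * (s i + a i / b) - r * (p i + a i / b) : ℝ)| := by
        rw [htR, abs_mul, abs_of_pos hbR]
    _ ≤ b * (|(r : ℝ)| * δ₁ + |(q : ℝ)| * δ₂) := by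
        gcongr; exact abs_mul_add_sub_mul_add_le (hp i).le (hs i).le

theorem stmt4_general (m : ℕ) :
    ∃ C : ℝ, 0 < C ∧
      ∀ (a : Fin m → ℤ) (b : ℕ), 1 ≤ b →
        GCDMonoid.gcd (Finset.univ.gcd a) (b : ℤ) = 1 →
        ∀ (q : ℕ), 1 ≤ q → ∀ (r : ℤ), 1 ≤ |r| → |r| < (q : ℤ) →
        ∀ (δ₁ δ₂ : ℝ), 0 ≤ δ₁ → δ₁ < 1/2 → 0 ≤ δ₂ → δ₂ < 1/2 →
        volume ({x : Fin m → ℝ | (∀ i, x i ∈ Set.Ico (0:ℝ) 1) ∧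
            ∃ p : Fin m → ℤ,
              (∀ i, |(q : ℝ) * x i - p i - (a i : ℝ) / b| < δ₁) ∧
              GCDMonoid.gcd (q : ℤ)
                (Finset.univ.gcd (fun i => (b : ℤ) * p i + a i)) = 1} ∩
          {x : Fin m → ℝ | (∀ i, x i ∈ Set.Ico (0:ℝ) 1) ∧
            ∃ s : Fin m → ℤ,
              ∀ i, |(r : ℝ) * x i - s i - (a i : ℝ) / b| < δ₂}) ≤
        ENNReal.ofReal (C * ((b : ℝ) * δ₁ * δ₂) ^ m) := by
  refine ⟨100 ^ m, by positivity, fun a b hb _ q hq r hr1 hrq δ₁ δ₂ hδ₁ _ hδ₂ hδ₂' => ?_⟩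
  have hr : r ≠ 0 := abs_pos.mp (one_pos.trans_le hr1)
  have hq' : (q : ℤ) ≠ 0 := by exact_mod_cast (by omega : q ≠ 0)
  by_cases hgcd : ((q : ℤ).gcd r : ℝ) ≤ b * (|(r : ℝ)| * δ₁ + |((q : ℤ) : ℝ)| * δ₂)
  · refine (measure_mono (t := univ.pi fun i => jointApproxSet q r (a i / b) δ₁ δ₂) ?_).trans
      ?_
    · rintro x ⟨⟨hx, p, hp, -⟩, -, s, hs⟩ i -
      exact ⟨hx i, p i, s i, by simpa using hp i, hs i⟩
    calc volume (univ.pi fun i => jointApproxSet q r (a i / b) δ₁ δ₂)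
        = ∏ i, volume (jointApproxSet q r (a i / b) δ₁ δ₂) := volume_pi_pi _
      _ ≤ ∏ _i : Fin m, ENNReal.ofReal (100 * b * δ₁ * δ₂) :=
          Finset.prod_le_prod' fun i _ => volume_jointApproxSet_le_of_gcd_le hq' hr hδ₁ hδ₂
            hδ₂'.le (by exact_mod_cast hb) hgcd
      _ = ENNReal.ofReal (100 ^ m * ((b : ℝ) * δ₁ * δ₂) ^ m) := by
          rw [Finset.prod_const, Finset.card_univ, Fintype.card_fin,
            ← ENNReal.ofReal_pow (by positivity), ← mul_pow, mul_assoc, mul_assoc, mul_assoc]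
  · refine (measure_mono_null (fun x hx => ?_) measure_empty).trans_le bot_le
    obtain ⟨⟨-, p, hp, hcop⟩, -, s, hs⟩ := hx
    exact hgcd (Int.gcd_le_of_approx hb hr hrq (by simpa using hp) hs hcop)

theorem stmt4 (m : ℕ) (hm : 1 ≤ m) :
    ∃ C : ℝ, 0 < C ∧
      ∀ (a : Fin m → ℤ) (b : ℕ), 1 ≤ b →
        GCDMonoid.gcd (Finset.univ.gcd a) (b : ℤ) = 1 →
        ∀ (q : ℕ), 1 ≤ q → ∀ (r : ℤ), 1 ≤ |r| → |r| < (q : ℤ) →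
        ∀ (δ₁ δ₂ : ℝ), 0 ≤ δ₁ → δ₁ < 1/2 → 0 ≤ δ₂ → δ₂ < 1/2 →
        volume ({x : Fin m → ℝ | (∀ i, x i ∈ Set.Ico (0:ℝ) 1) ∧
            ∃ p : Fin m → ℤ,
              (∀ i, |(q : ℝ) * x i - p i - (a i : ℝ) / b| < δ₁) ∧
              GCDMonoid.gcd (q : ℤ)
                (Finset.univ.gcd (fun i => (b : ℤ) * p i + a i)) = 1} ∩
          {x : Fin m → ℝ | (∀ i, x i ∈ Set.Ico (0:ℝ) 1) ∧
            ∃ s : Fin m → ℤ,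
              ∀ i, |(r : ℝ) * x i - s i - (a i : ℝ) / b| < δ₂}) ≤
        ENNReal.ofReal (C * ((b : ℝ) * δ₁ * δ₂) ^ m) :=
  stmt4_general m
end

section
/- Let y ∈ ℝ, and for each nonzero integer d let (a_d, b_d) ∈ ℤ × ℕ satisfy |b_d y - a_d| < 1/|d|, 1 ≤ b_d ≤ |d|, and gcd(a_d, b_d) = 1 (such pairs exist by Dirichlet's theorem). Let ψ: ℕ → [0,1/2) satisfy ψ(q) ≤ 1/q for all q. Suppose integers q, r, d, e satisfy 1 ≤ r < q, 1 ≤ |e| < |d|, gcd(d,e) ≥ 3, and r ≥ 2d². Define Ã(d, ψ(q)) = {x ∈ [0,1) : ∃ p ∈ ℤ, |dx - p - y| < ψ(q), gcd(d, b_d p + a_d) = 1} and A(e, ψ(r)) = {x ∈ [0,1) : ∃ s ∈ ℤ, |ex - s - y| < ψ(r)}. Then Ã(d, ψ(q)) ∩ A(e, ψ(r)) = ∅. -/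
/-!
Take `x` in both sets, with witnesses `p` and `s`, and write `a = a_d`, `b = b_d`. The integer
`t = e (b p + a) - d (b s + a)` equals `b (d (e x - s - y) - e (d x - p - y)) + (d - e) (b y - a)`.
Since `ψ(r), ψ(q) ≤ 1 / r` and `r ≥ 2 d²`, the first summand has absolute value at most `b / |d| ≤ 1`,
and the second is less than `2 |d| / |d| = 2`. So `|t| < 3 ≤ gcd(d, e)`, while `gcd(d, e)` divides `t`;
hence `t = 0`. As `d` is coprime to `b p + a`, the identity `e (b p + a) = d (b s + a)` forces `d ∣ e`,
which is impossible when `0 < |e| < |d|`.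
-/

lemma abs_mul_add_abs_mul_le_one_div {ψ : ℕ → ℝ} (hψ : ∀ n : ℕ, 1 ≤ n → ψ n ≤ 1 / (n : ℝ))
    {q r : ℕ} (hr : 1 ≤ r) (hrq : r ≤ q) {D E : ℝ} (hED : |E| < |D|) (hr2 : 2 * D ^ 2 ≤ r) :
    |D| * ψ r + |E| * ψ q ≤ 1 / |D| := by
  have hD : 0 < |D| := (abs_nonneg E).trans_lt hED
  have hr0 : (0 : ℝ) < r := by exact_mod_cast hr
  have hrqR : (r : ℝ) ≤ q := by exact_mod_cast hrq
  have hψr : |D| * ψ r ≤ |D| / r := by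
    rw [div_eq_mul_one_div]
    exact mul_le_mul_of_nonneg_left (hψ r hr) hD.le
  have hψq : |E| * ψ q ≤ |E| / q := by
    rw [div_eq_mul_one_div]
    exact mul_le_mul_of_nonneg_left (hψ q (hr.trans hrq)) (abs_nonneg E)
  have hEq : |E| / q ≤ |D| / r := by
    rw [div_le_div_iff₀ (hr0.trans_le hrqR) hr0]
    nlinarith [abs_nonneg E]
  have hDr : |D| / r + |D| / r ≤ 1 / |D| := by
    rw [← add_div, div_le_div_iff₀ hr0 hD]
    nlinarith [sq_abs D]
  linarith

lemma abs_mul_add_sub_mul_add_lt_three {x y D E P S A B εq εr : ℝ}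
    (hP : |D * x - P - y| < εq) (hS : |E * x - S - y| < εr) (hA : |B * y - A| < 1 / |D|)
    (hB : 0 ≤ B) (hBD : B ≤ |D|) (hED : |E| < |D|) (hε : |D| * εr + |E| * εq ≤ 1 / |D|) :
    |E * (B * P + A) - D * (B * S + A)| < 3 := by
  have hD : 0 < |D| := (abs_nonneg E).trans_lt hED
  have hsplit : E * (B * P + A) - D * (B * S + A)
      = B * (D * (E * x - S - y) - E * (D * x - P - y)) + (D - E) * (B * y - A) := by ring
  have hdiff : |D * (E * x - S - y) - E * (D * x - P - y)| ≤ 1 / |D| :=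
    calc |D * (E * x - S - y) - E * (D * x - P - y)|
        ≤ |D| * |E * x - S - y| + |E| * |D * x - P - y| := by
          rw [← abs_mul, ← abs_mul]; exact abs_sub _ _
      _ ≤ |D| * εr + |E| * εq := by gcongr
      _ ≤ 1 / |D| := hε
  have hfirst : B * |D * (E * x - S - y) - E * (D * x - P - y)| ≤ 1 :=
    calc _ ≤ B * (1 / |D|) := mul_le_mul_of_nonneg_left hdiff hB
      _ ≤ 1 := by rw [mul_one_div, div_le_one hD]; exact hBD
  have hsecond : |D - E| * |B * y - A| < 2 :=
    calc |D - E| * |B * y - A| ≤ 2 * |D| * |B * y - A| := by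
          gcongr; linarith [abs_sub D E]
      _ < 2 * |D| * (1 / |D|) := by gcongr
      _ = 2 := by field_simp
  calc |E * (B * P + A) - D * (B * S + A)|
      ≤ B * |D * (E * x - S - y) - E * (D * x - P - y)| + |D - E| * |B * y - A| := by
        rw [hsplit]
        exact (abs_add_le _ _).trans_eq (by rw [abs_mul, abs_mul, abs_of_nonneg hB])
    _ < 3 := by linarith

lemma Int.mul_eq_mul_of_abs_sub_lt_gcd {d e u v : ℤ} (h : |e * u - d * v| < Int.gcd d e) :
    e * u = d * v := by
  have hdvd : (Int.gcd d e : ℤ) ∣ e * u - d * v :=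
    dvd_sub ((Int.gcd_dvd_right d e).mul_right u) ((Int.gcd_dvd_left d e).mul_right v)
  exact sub_eq_zero.mp (Int.eq_zero_of_abs_lt_dvd hdvd h)

theorem stmt5_general (y : ℝ) (a : ℤ → ℤ) (b : ℤ → ℕ)
    (hdir : ∀ d : ℤ, d ≠ 0 →
      |(b d : ℝ) * y - (a d : ℝ)| < 1 / |(d : ℝ)| ∧
      1 ≤ b d ∧ (b d : ℤ) ≤ |d| ∧ Int.gcd (a d) (b d) = 1)
    (ψ : ℕ → ℝ)
    (hψ : ∀ q : ℕ, 1 ≤ q → ψ q ≤ 1 / (q : ℝ))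
    (q r : ℕ) (d e : ℤ)
    (hr1 : 1 ≤ r) (hrq : r < q) (he1 : 1 ≤ |e|) (hed : |e| < |d|)
    (hgcd : 3 ≤ Int.gcd d e) (hr2 : 2 * d ^ 2 ≤ (r : ℤ)) :
    {x : ℝ | x ∈ Set.Ico (0:ℝ) 1 ∧
        ∃ p : ℤ, |(d : ℝ) * x - p - y| < ψ q ∧ Int.gcd d ((b d : ℤ) * p + a d) = 1} ∩
      {x : ℝ | x ∈ Set.Ico (0:ℝ) 1 ∧ ∃ s : ℤ, |(e : ℝ) * x - s - y| < ψ r} = ∅ := by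
  refine Set.eq_empty_iff_forall_notMem.mpr ?_
  rintro x ⟨⟨-, p, hp, hcop⟩, -, s, hs⟩
  have hd0 : d ≠ 0 := by rintro rfl; simp at hed; omega
  obtain ⟨hy, -, hbd, -⟩ := hdir d hd0
  have hedR : |(e : ℝ)| < |(d : ℝ)| := by exact_mod_cast hed
  have hε := abs_mul_add_abs_mul_le_one_div hψ hr1 hrq.le hedR (by exact_mod_cast hr2)
  have hlt : |e * ((b d : ℤ) * p + a d) - d * ((b d : ℤ) * s + a d)| < 3 := by
    exact_mod_cast abs_mul_add_sub_mul_add_lt_three hp hs hy (Nat.cast_nonneg _)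
      (by exact_mod_cast hbd) hedR hε
  have heq := Int.mul_eq_mul_of_abs_sub_lt_gcd (hlt.trans_le (by exact_mod_cast hgcd))
  have hde : d ∣ e :=
    (Int.isCoprime_iff_gcd_eq_one.mpr hcop).dvd_of_dvd_mul_right ⟨_, heq⟩
  have hle := Int.natAbs_le_of_dvd_ne_zero hde (by rintro rfl; simp at he1)
  rw [Int.abs_eq_natAbs, Int.abs_eq_natAbs] at hed
  omega

theorem stmt5 (y : ℝ) (a : ℤ → ℤ) (b : ℤ → ℕ)
    (hdir : ∀ d : ℤ, d ≠ 0 →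
      |(b d : ℝ) * y - (a d : ℝ)| < 1 / |(d : ℝ)| ∧
      1 ≤ b d ∧ (b d : ℤ) ≤ |d| ∧ Int.gcd (a d) (b d) = 1)
    (ψ : ℕ → ℝ) (hψ0 : ∀ q, 0 ≤ ψ q) (hψ1 : ∀ q, ψ q < 1/2)
    (hψ : ∀ q : ℕ, 1 ≤ q → ψ q ≤ 1 / (q : ℝ))
    (q r : ℕ) (d e : ℤ)
    (hr1 : 1 ≤ r) (hrq : r < q) (he1 : 1 ≤ |e|) (hed : |e| < |d|)
    (hgcd : 3 ≤ Int.gcd d e) (hr2 : 2 * d ^ 2 ≤ (r : ℤ)) :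
    {x : ℝ | x ∈ Set.Ico (0:ℝ) 1 ∧
        ∃ p : ℤ, |(d : ℝ) * x - p - y| < ψ q ∧ Int.gcd d ((b d : ℤ) * p + a d) = 1} ∩
      {x : ℝ | x ∈ Set.Ico (0:ℝ) 1 ∧ ∃ s : ℤ, |(e : ℝ) * x - s - y| < ψ r} = ∅ :=
  stmt5_general y a b hdir ψ hψ q r d e hr1 hrq he1 hed hgcd hr2
end

section
/- Let y ∈ ℝ, d a nonzero integer, and a ∈ ℤ, b ∈ ℕ with |by - a| < 1/|d|, 1 ≤ b ≤ |d|, gcd(a,b) = 1. Let e be a nonzero integer with |e| < |d| and gcd(d,e) ≥ 3. Then for all integers p, s with gcd(d, bp + a) = 1, we have |(p+y)/d - (s+y)/e| > 1/(b|de|). -/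
/-!
Multiplying the difference by `b d e` gives `N + (e - d)(b y - a)` with the integer
`N = e (b p + a) - d (b s + a)`. Since `d` is coprime to `b p + a` and `|e| < |d|`, `d ∤ e`, so
`N ≠ 0`; as `gcd(d, e)` divides `N`, in fact `|N| ≥ 3`. The error term is less than
`|e - d| / |d| < 2` in absolute value, so the product exceeds `1`.
-/

theorem Int.mul_ne_mul_of_isCoprime_of_abs_lt {d e m : ℤ} (hm : IsCoprime d m) (he : e ≠ 0)
    (hed : |e| < |d|) (n : ℤ) : e * m ≠ d * n := by
  intro h
  have hde : d ∣ e := hm.dvd_of_dvd_mul_right ⟨n, h⟩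
  have := Int.le_of_dvd (abs_pos.mpr he) ((abs_dvd_abs d e).mpr hde)
  omega

theorem abs_sub_mul_lt_two {K : Type*} [Field K] [LinearOrder K] [IsStrictOrderedRing K]
    {d e ε : K} (hed : |e| < |d|) (hε : |ε| < 1 / |d|) : |(e - d) * ε| < 2 := by
  have hd : 0 < |d| := (abs_nonneg e).trans_lt hed
  calc |(e - d) * ε| = |e - d| * |ε| := abs_mul _ _
    _ ≤ 2 * |d| * |ε| := by
        gcongr
        linarith [abs_sub e d]
    _ < 2 * |d| * (1 / |d|) := by gcongr
    _ = 2 := by field_simp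

theorem stmt6_general (y : ℝ) (d : ℤ) (hd : d ≠ 0) (a : ℤ) (b : ℕ) (hb : 1 ≤ b)
    (h1 : |(b : ℝ) * y - (a : ℝ)| < 1 / |(d : ℝ)|)
    (e : ℤ) (he : e ≠ 0) (hed : |e| < |d|) (hgcd : 3 ≤ Int.gcd d e)
    (p s : ℤ) (hp : Int.gcd d ((b : ℤ) * p + a) = 1) :
    1 / ((b : ℝ) * |(d : ℝ) * (e : ℝ)|) <
      |((p : ℝ) + y) / (d : ℝ) - ((s : ℝ) + y) / (e : ℝ)| := by
  set N : ℤ := e * (b * p + a) - d * (b * s + a) with hN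
  have hN0 : N ≠ 0 := sub_ne_zero.mpr <|
    Int.mul_ne_mul_of_isCoprime_of_abs_lt (Int.isCoprime_iff_gcd_eq_one.mpr hp) he hed _
  have hN3 : (3 : ℝ) ≤ |(N : ℝ)| := by
    have hdvd : (Int.gcd d e : ℤ) ∣ N :=
      dvd_sub ((Int.gcd_dvd_right d e).mul_right _) ((Int.gcd_dvd_left d e).mul_right _)
    have := Int.le_abs_of_dvd hN0 hdvd
    exact_mod_cast (show (3 : ℤ) ≤ |N| by omega)
  have herr : |((e : ℝ) - d) * (b * y - a)| < 2 :=
    abs_sub_mul_lt_two (by exact_mod_cast hed) h1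
  have key : (((p : ℝ) + y) / d - ((s : ℝ) + y) / e) * (b * (d * e))
      = (N : ℝ) + ((e : ℝ) - d) * (b * y - a) := by
    rw [hN]
    push_cast
    field_simp
    ring
  have hpos : (0 : ℝ) < b * |(d : ℝ) * e| := by positivity
  rw [div_lt_iff₀ hpos, ← Nat.abs_cast b, ← abs_mul, ← abs_mul, key]
  linarith [abs_sub_abs_le_abs_add (N : ℝ) (((e : ℝ) - d) * (b * y - a))]

theorem stmt6 (y : ℝ) (d : ℤ) (hd : d ≠ 0) (a : ℤ) (b : ℕ) (hb : 1 ≤ b)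
    (h1 : |(b : ℝ) * y - (a : ℝ)| < 1 / |(d : ℝ)|) (h2 : (b : ℤ) ≤ |d|)
    (h3 : Int.gcd a b = 1)
    (e : ℤ) (he : e ≠ 0) (hed : |e| < |d|) (hgcd : 3 ≤ Int.gcd d e)
    (p s : ℤ) (hp : Int.gcd d ((b : ℤ) * p + a) = 1) :
    1 / ((b : ℝ) * |(d : ℝ) * (e : ℝ)|) <
      |((p : ℝ) + y) / (d : ℝ) - ((s : ℝ) + y) / (e : ℝ)| :=
  stmt6_general y d hd a b hb h1 e he hed hgcd p s hp
end

section
/- Let n ≥ 2, m ≥ 1, δ₁, δ₂ ∈ [0,1/2), y, z ∈ ℝ^m, and q, r ∈ ℤ^n \ {0} with q not parallel to r (i.e., q and r are linearly independent over ℝ). Define A(q,δ₁) = {x ∈ [0,1)^{nm} : ∃p ∈ ℤ^m, |qx - p - y| < δ₁} and A(r,δ₂) = {x ∈ [0,1)^{nm} : ∃s ∈ ℤ^m, |rx - s - z| < δ₂}. Then |A(q,δ₁) ∩ A(r,δ₂)| = |A(q,δ₁)|·|A(r,δ₂)|. -/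
/-!
Let `Q` be the integer matrix with rows `q` and `r`. Acting columnwise, `Q` induces a continuous
homomorphism of tori `(𝕋^m)^n → (𝕋^m)^2`, which is surjective because the rows are linearly
independent over `ℝ`. A continuous surjective homomorphism of compact groups carries Haar
probability measure to Haar probability measure, and reduction modulo `1` carries Lebesgue measure
on `[0,1)^{nm}` to Haar measure on the torus. Hence `x ↦ (q x mod 1, r x mod 1)` is uniformly
distributed on `𝕋^m × 𝕋^m`, i.e. its two components are independent; both sets in the theorem are
preimages of balls under one component each.
-/

open MeasureTheory ProbabilityTheory Set

theorem Matrix.mulVec_surjective_of_linearIndependent_row {ρ ι R : Type*} [Field R]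
    [Fintype ρ] [Fintype ι] {M : Matrix ρ ι R} (hM : LinearIndependent R M.row) :
    Function.Surjective M.mulVec := by
  have h : Module.finrank R (LinearMap.range M.mulVecLin) = Module.finrank R (ρ → R) := by
    rw [Module.finrank_fintype_fun_eq_card, ← hM.rank_matrix]
    rfl
  exact LinearMap.range_eq_top.1 (Submodule.eq_top_of_finrank_eq h)

namespace Matrix

variable {ρ ι κ G : Type*} [Fintype ι] [AddCommGroup G]

def zsmulVec (Q : Matrix ρ ι ℤ) : (ι → G) →+ (ρ → G) :=
  AddMonoidHom.mk' (fun x a => ∑ i, Q a i • x i) fun x y => by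
    ext a : 1
    simp only [Pi.add_apply, smul_add, Finset.sum_add_distrib]

@[simp]
theorem zsmulVec_apply (Q : Matrix ρ ι ℤ) (x : ι → G) (a : ρ) :
    Q.zsmulVec x a = ∑ i, Q a i • x i :=
  rfl

theorem continuous_zsmulVec [TopologicalSpace G] [IsTopologicalAddGroup G] (Q : Matrix ρ ι ℤ) :
    Continuous (Q.zsmulVec : (ι → G) → (ρ → G)) :=
  continuous_pi fun a => continuous_finsetSum _ fun i _ => (continuous_apply i).zsmul (Q a i)

theorem zsmulVec_coe_addCircle {T : ℝ} (Q : Matrix ρ ι ℤ) (x : ι → κ → ℝ) :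
    Q.zsmulVec (fun i j => (x i j : AddCircle T)) =
      fun a j => ((Q.map ((↑) : ℤ → ℝ) *ᵥ fun i => x i j) a : AddCircle T) := by
  ext a j
  simp [mulVec, dotProduct, Finset.sum_apply]

theorem zsmulVec_addCircle_surjective {T : ℝ} [Fintype ρ] {Q : Matrix ρ ι ℤ}
    (hQ : LinearIndependent ℝ (Q.map ((↑) : ℤ → ℝ)).row) :
    Function.Surjective (Q.zsmulVec : (ι → κ → AddCircle T) → (ρ → κ → AddCircle T)) := by
  intro t
  choose b hb using fun a j => QuotientAddGroup.mk_surjective (t a j)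
  choose w hw using fun j => mulVec_surjective_of_linearIndependent_row hQ fun a => b a j
  refine ⟨fun i j => (w j i : AddCircle T), ?_⟩
  ext a j
  rw [zsmulVec_coe_addCircle]
  simp [hw, hb]

end Matrix

theorem MeasureTheory.MeasurePreserving.iIndepFun_apply {Ω ρ : Type*} [MeasurableSpace Ω]
    [Fintype ρ] {X : ρ → Type*} [∀ a, MeasurableSpace (X a)] {μ : Measure Ω}
    {ν : ∀ a, Measure (X a)} [∀ a, IsProbabilityMeasure (ν a)] {F : Ω → ∀ a, X a}
    (hF : MeasurePreserving F μ (Measure.pi ν)) :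
    iIndepFun (fun a ω => F ω a) μ := by
  have : IsProbabilityMeasure (μ.map F) := hF.map_eq ▸ inferInstance
  have : IsProbabilityMeasure μ := Measure.isProbabilityMeasure_of_map F
  have hFa : ∀ a, MeasurePreserving (fun ω => F ω a) μ (ν a) :=
    fun a => (measurePreserving_eval (μ := ν) a).comp hF
  rw [iIndepFun_iff_map_fun_eq_pi_map fun a => (hFa a).aemeasurable]
  simp only [(hFa _).map_eq]
  exact hF.map_eq

theorem MeasureTheory.MeasurePreserving.pi_restrict_pi {ι α β : Type*} [Fintype ι]
    [MeasurableSpace α] [MeasurableSpace β] {μ : Measure α} {ν : Measure β} [SigmaFinite μ]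
    [SigmaFinite ν] {f : α → β} {s : Set α} (hf : MeasurePreserving f (μ.restrict s) ν) :
    MeasurePreserving (fun (x : ι → α) i => f (x i))
      ((Measure.pi fun _ => μ).restrict (univ.pi fun _ => s)) (Measure.pi fun _ => ν) := by
  rw [Measure.restrict_pi_pi]
  exact measurePreserving_pi _ _ fun _ => hf

namespace UnitAddCircle

instance : IsProbabilityMeasure (volume : Measure UnitAddCircle) :=
  ⟨UnitAddCircle.measure_univ⟩

theorem measurePreserving_coe_Ico (t : ℝ) :
    MeasurePreserving ((↑) : ℝ → UnitAddCircle) (volume.restrict (Ico t (t + 1))) volume := by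
  rw [Measure.restrict_congr_set Ico_ae_eq_Ioc]
  exact UnitAddCircle.measurePreserving_mk t

theorem dist_coe_lt_iff (s a δ : ℝ) :
    dist (s : UnitAddCircle) a < δ ↔ ∃ p : ℤ, |s - p - a| < δ := by
  rw [dist_eq_norm, ← AddCircle.coe_sub, UnitAddCircle.norm_eq]
  refine ⟨fun h => ⟨round (s - a), by rwa [sub_right_comm]⟩, fun ⟨p, hp⟩ => ?_⟩
  exact (round_le (s - a) p).trans_lt (by rwa [sub_right_comm])

theorem coe_mem_pi_ball_iff {κ : Type*} (s w : κ → ℝ) (δ : ℝ) :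
    (fun j => (s j : UnitAddCircle)) ∈ univ.pi (fun j => Metric.ball (w j : UnitAddCircle) δ) ↔
      ∃ p : κ → ℤ, ∀ j, |s j - p j - w j| < δ := by
  simp only [mem_univ_pi, Metric.mem_ball, dist_coe_lt_iff]
  exact Classical.skolem

variable {ι κ ρ : Type*} [Fintype ι] [Fintype κ] [Fintype ρ]

theorem measurePreserving_coe_unitCube :
    MeasurePreserving (fun (x : ι → κ → ℝ) i j => (x i j : UnitAddCircle))
      (volume.restrict (univ.pi fun _ => univ.pi fun _ => Ico 0 1)) volume := by
  have h := ((measurePreserving_coe_Ico 0).pi_restrict_pi (ι := κ)).pi_restrict_pi (ι := ι)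
  rwa [zero_add] at h

-- Instance search for the Haar measure on the nested torus `ι → κ → UnitAddCircle` needs more room.
set_option synthInstance.maxSize 1000 in
theorem measurePreserving_zsmulVec_coe {Q : Matrix ρ ι ℤ}
    (hQ : LinearIndependent ℝ (Q.map ((↑) : ℤ → ℝ)).row) :
    MeasurePreserving (fun (x : ι → κ → ℝ) => Q.zsmulVec fun i j => (x i j : UnitAddCircle))
      (volume.restrict (univ.pi fun _ => univ.pi fun _ => Ico 0 1)) volume :=
  (AddMonoidHom.measurePreserving Q.continuous_zsmulVec
    (Matrix.zsmulVec_addCircle_surjective hQ) (by simp)).comp measurePreserving_coe_unitCube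

theorem iIndepFun_coe_sum_mul {Q : Matrix ρ ι ℤ}
    (hQ : LinearIndependent ℝ (Q.map ((↑) : ℤ → ℝ)).row) :
    iIndepFun (fun a (x : ι → κ → ℝ) j => ((∑ i, (Q a i : ℝ) * x i j : ℝ) : UnitAddCircle))
      (volume.restrict (univ.pi fun _ => univ.pi fun _ => Ico 0 1)) := by
  have h := (measurePreserving_zsmulVec_coe (κ := κ) hQ).iIndepFun_apply
  simp only [Matrix.zsmulVec_coe_addCircle] at h
  exact h

end UnitAddCircle

open UnitAddCircle in
theorem stmt12_general (n m : ℕ) (δ₁ δ₂ : ℝ) (y z : Fin m → ℝ) (q r : Fin n → ℤ)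
    (hind : LinearIndependent ℝ ![fun i => (q i : ℝ), fun i => (r i : ℝ)]) :
    volume ({x : Fin n → Fin m → ℝ | (∀ i j, x i j ∈ Set.Ico (0:ℝ) 1) ∧
        ∃ p : Fin m → ℤ, ∀ j, |(∑ i, (q i : ℝ) * x i j) - p j - y j| < δ₁} ∩
      {x : Fin n → Fin m → ℝ | (∀ i j, x i j ∈ Set.Ico (0:ℝ) 1) ∧
        ∃ s : Fin m → ℤ, ∀ j, |(∑ i, (r i : ℝ) * x i j) - s j - z j| < δ₂}) =
    volume {x : Fin n → Fin m → ℝ | (∀ i j, x i j ∈ Set.Ico (0:ℝ) 1) ∧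
        ∃ p : Fin m → ℤ, ∀ j, |(∑ i, (q i : ℝ) * x i j) - p j - y j| < δ₁} *
    volume {x : Fin n → Fin m → ℝ | (∀ i j, x i j ∈ Set.Ico (0:ℝ) 1) ∧
        ∃ s : Fin m → ℤ, ∀ j, |(∑ i, (r i : ℝ) * x i j) - s j - z j| < δ₂} := by
  set Q : Matrix (Fin 2) (Fin n) ℤ := Matrix.of ![q, r]
  have hQ : LinearIndependent ℝ (Q.map ((↑) : ℤ → ℝ)).row := by
    convert hind using 1
    ext a i
    fin_cases a <;> rfl
  set cube : Set (Fin n → Fin m → ℝ) := univ.pi fun _ => univ.pi fun _ => Ico 0 1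
  have hcube : MeasurableSet cube := .univ_pi fun _ => .univ_pi fun _ => measurableSet_Ico
  have hball : ∀ (w : Fin m → ℝ) (δ : ℝ),
      MeasurableSet (univ.pi fun j => Metric.ball (w j : UnitAddCircle) δ) :=
    fun _ _ => .univ_pi fun _ => measurableSet_ball
  have hset : ∀ (c : Fin n → ℤ) (w : Fin m → ℝ) (δ : ℝ),
      {x : Fin n → Fin m → ℝ | (∀ i j, x i j ∈ Set.Ico (0:ℝ) 1) ∧
        ∃ p : Fin m → ℤ, ∀ j, |(∑ i, (c i : ℝ) * x i j) - p j - w j| < δ} =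
      (fun x j => ((∑ i, (c i : ℝ) * x i j : ℝ) : UnitAddCircle)) ⁻¹'
        univ.pi (fun j => Metric.ball (w j : UnitAddCircle) δ) ∩ cube := by
    intro c w δ
    ext x
    rw [mem_inter_iff, mem_preimage, coe_mem_pi_ball_iff, and_comm]
    simp only [cube, mem_univ_pi]
    rfl
  rw [hset, hset, ← inter_inter_distrib_right, ← Measure.restrict_apply' hcube,
    ← Measure.restrict_apply' hcube, ← Measure.restrict_apply' hcube]
  exact ((iIndepFun_coe_sum_mul hQ).indepFun zero_ne_one).measure_inter_preimage_eq_mul _ _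
    (hball y δ₁) (hball z δ₂)

theorem stmt12 (n m : ℕ) (hn : 2 ≤ n) (hm : 1 ≤ m)
    (δ₁ δ₂ : ℝ) (hδ₁0 : 0 ≤ δ₁) (hδ₁ : δ₁ < 1/2) (hδ₂0 : 0 ≤ δ₂) (hδ₂ : δ₂ < 1/2)
    (y z : Fin m → ℝ) (q r : Fin n → ℤ) (hq : q ≠ 0) (hr : r ≠ 0)
    (hind : LinearIndependent ℝ ![fun i => (q i : ℝ), fun i => (r i : ℝ)]) :
    volume ({x : Fin n → Fin m → ℝ | (∀ i j, x i j ∈ Set.Ico (0:ℝ) 1) ∧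
        ∃ p : Fin m → ℤ, ∀ j, |(∑ i, (q i : ℝ) * x i j) - p j - y j| < δ₁} ∩
      {x : Fin n → Fin m → ℝ | (∀ i j, x i j ∈ Set.Ico (0:ℝ) 1) ∧
        ∃ s : Fin m → ℤ, ∀ j, |(∑ i, (r i : ℝ) * x i j) - s j - z j| < δ₂}) =
    volume {x : Fin n → Fin m → ℝ | (∀ i j, x i j ∈ Set.Ico (0:ℝ) 1) ∧
        ∃ p : Fin m → ℤ, ∀ j, |(∑ i, (q i : ℝ) * x i j) - p j - y j| < δ₁} *
    volume {x : Fin n → Fin m → ℝ | (∀ i j, x i j ∈ Set.Ico (0:ℝ) 1) ∧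
        ∃ s : Fin m → ℤ, ∀ j, |(∑ i, (r i : ℝ) * x i j) - s j - z j| < δ₂} :=
  stmt12_general n m δ₁ δ₂ y z q r hind
end

section
/- Let n, m ≥ 1, y ∈ ℝ^m, δ ∈ [0,1/2), and suppose for each nonzero integer d a pair (a_d, b_d) ∈ ℤ^m × ℕ with gcd(a_d, b_d) = 1 is given. For q ∈ ℤ^n \ {0} with gcd(q) = d, define Ã_{n,m}(q,δ) = {x ∈ [0,1)^{nm} : ∃p ∈ ℤ^m, |qx - p - y| < δ, gcd(q, b_d p + a_d) = 1}, and Ã_{1,m}(d,δ) = {x ∈ [0,1)^m : ∃p ∈ ℤ^m, |dx - p - y| < δ, gcd(d, b_d p + a_d) = 1}. Then |Ã_{n,m}(q,δ)| = |Ã_{1,m}(d,δ)|. -/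
/-!
Write `q = d • k`. Both sides only see `k x` (resp. `x`) through the set of `u ∈ ℝ^m` with
`|d u - p - y| < δ` for some `p` with `gcd(d, b p + a) = 1`. This set is `ℤ^m`-periodic, since
replacing `p` by `p + d t` does not change `b p + a` modulo `d`, so it is the preimage of a set
`T` in the torus `(ℝ/ℤ)^m`, onto which the unit cube maps measure-preservingly. As `k ≠ 0`, the
map `z ↦ ∑ i, k i • z i` from `((ℝ/ℤ)^m)^n` to `(ℝ/ℤ)^m` is a continuous surjective homomorphism
of compact groups, hence preserves the Haar probability measures, so both sides equal `vol T`.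
-/

open MeasureTheory Set

theorem MeasureTheory.MeasurePreserving.measure_inter_preimage {α β : Type*}
    [MeasurableSpace α] [MeasurableSpace β] {μ : Measure α} {ν : Measure β} {f : α → β}
    {s : Set α} {t : Set β} (hf : MeasurePreserving f (μ.restrict s) ν) (hs : MeasurableSet s)
    (ht : NullMeasurableSet t ν) : μ (s ∩ f ⁻¹' t) = ν t := by
  rw [inter_comm, ← Measure.restrict_apply' hs, hf.measure_preimage ht]

theorem MeasureTheory.MeasurePreserving.pi_restrict_univ_pi {ι α β : Type*} [Fintype ι]
    [MeasureSpace α] [MeasureSpace β] [SigmaFinite (volume : Measure α)]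
    [SigmaFinite (volume : Measure β)]
    {f : α → β} {s : Set α} (hf : MeasurePreserving f (volume.restrict s) volume) :
    MeasurePreserving (fun (x : ι → α) i => f (x i))
      ((volume : Measure (ι → α)).restrict (univ.pi fun _ => s)) volume := by
  rw [volume_pi, volume_pi, Measure.restrict_pi_pi]
  exact measurePreserving_pi _ _ fun _ => hf

instance : IsProbabilityMeasure (volume : Measure UnitAddCircle) := ⟨UnitAddCircle.measure_univ⟩

theorem UnitAddCircle.measurePreserving_coe_Ico_s13 :
    MeasurePreserving ((↑) : ℝ → UnitAddCircle) (volume.restrict (Ico 0 1)) volume := by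
  simpa [Measure.restrict_congr_set Ico_ae_eq_Ioc] using UnitAddCircle.measurePreserving_mk 0

namespace UnitAddTorus

theorem measurePreserving_coe_cube (ι : Type*) [Fintype ι] :
    MeasurePreserving (fun (u : ι → ℝ) i => (u i : UnitAddCircle))
      (volume.restrict (univ.pi fun _ => Ico 0 1)) volume :=
  UnitAddCircle.measurePreserving_coe_Ico_s13.pi_restrict_univ_pi

theorem exists_measurableSet_preimage_coe_eq {ι : Type*} [Fintype ι]
    {S : Set (ι → ℝ)} (hS : MeasurableSet S)
    (hper : ∀ u ∈ S, ∀ t : ι → ℤ, (fun i => u i + t i) ∈ S) :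
    ∃ T : Set (UnitAddTorus ι), MeasurableSet T ∧
      (fun u i => (u i : UnitAddCircle)) ⁻¹' T = S := by
  refine ⟨(fun z i => (AddCircle.equivIco 1 0 (z i) : ℝ)) ⁻¹' S,
    measurable_pi_lambda _ (fun i => measurable_subtype_coe.comp
      ((AddCircle.measurableEquivIco 1 0).measurable.comp (measurable_pi_apply i))) hS, ?_⟩
  ext u
  have hfract : (fun i => (AddCircle.equivIco 1 0 (u i : UnitAddCircle) : ℝ)) =
      fun i => Int.fract (u i) := by
    ext i
    rw [AddCircle.coe_equivIco_mk_apply, div_one, mul_one]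
  simp only [mem_preimage, hfract]
  refine ⟨fun h => ?_, fun h => ?_⟩
  · simpa only [Int.fract_add_floor] using hper _ h fun i => ⌊u i⌋
  · simpa only [Int.cast_neg, ← sub_eq_add_neg, Int.self_sub_floor] using hper _ h fun i => -⌊u i⌋

end UnitAddTorus

section sumZSMulHom

variable {ι G : Type*} [Fintype ι] [AddCommGroup G]

def sumZSMulHom (k : ι → ℤ) : (ι → G) →+ G where
  toFun z := ∑ i, k i • z i
  map_zero' := by simp
  map_add' z w := by simp [smul_add, Finset.sum_add_distrib]

theorem sumZSMulHom_apply (k : ι → ℤ) (z : ι → G) : sumZSMulHom k z = ∑ i, k i • z i := rfl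

theorem surjective_sumZSMulHom [DivisibleBy G ℤ] {k : ι → ℤ} (hk : k ≠ 0) :
    Function.Surjective (sumZSMulHom (G := G) k) := by
  classical
  obtain ⟨i, hi⟩ := Function.ne_iff.mp hk
  intro w
  refine ⟨Pi.single i (DivisibleBy.div w (k i)), ?_⟩
  simp [sumZSMulHom_apply, Pi.single_apply, DivisibleBy.div_cancel _ hi]

theorem measurePreserving_sumZSMulHom [DivisibleBy G ℤ] [TopologicalSpace G]
    [IsTopologicalAddGroup G] [CompactSpace G] [SecondCountableTopology G] [MeasureSpace G]
    [BorelSpace G] [(volume : Measure G).IsAddHaarMeasure]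
    [IsProbabilityMeasure (volume : Measure G)] {k : ι → ℤ} (hk : k ≠ 0) :
    MeasurePreserving (sumZSMulHom (G := G) k) volume volume :=
  AddMonoidHom.measurePreserving
    (continuous_finsetSum _ fun i _ => (continuous_apply i).zsmul (k i))
    (surjective_sumZSMulHom hk) (by simp)

end sumZSMulHom

theorem UnitAddTorus.sumZSMulHom_coe {ι κ : Type*} [Fintype ι] (k : ι → ℤ) (x : ι → κ → ℝ) :
    sumZSMulHom k (fun i j => (x i j : UnitAddCircle)) =
      fun j => ((∑ i, k i * x i j : ℝ) : UnitAddCircle) := by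
  ext j
  simp [sumZSMulHom_apply, ← zsmul_eq_mul]

theorem volume_cube_inter_preimage_sum_zsmul {ι κ : Type*} [Fintype ι] [Fintype κ]
    {S : Set (κ → ℝ)} (hS : MeasurableSet S)
    (hper : ∀ u ∈ S, ∀ t : κ → ℤ, (fun j => u j + t j) ∈ S) {k : ι → ℤ} (hk : k ≠ 0) :
    volume {x : ι → κ → ℝ | (∀ i j, x i j ∈ Ico 0 1) ∧ (fun j => ∑ i, k i * x i j) ∈ S} =
      volume {u : κ → ℝ | (∀ j, u j ∈ Ico 0 1) ∧ u ∈ S} := by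
  obtain ⟨T, hT, rfl⟩ := UnitAddTorus.exists_measurableSet_preimage_coe_eq hS hper
  have hcoe := UnitAddTorus.measurePreserving_coe_cube κ
  have hL : {x : ι → κ → ℝ | (∀ i j, x i j ∈ Ico 0 1) ∧
      (fun j => ∑ i, k i * x i j) ∈ (fun u j => (u j : UnitAddCircle)) ⁻¹' T} =
      (univ.pi fun _ => univ.pi fun _ => Ico (0 : ℝ) 1) ∩
        (sumZSMulHom k ∘ fun (x : ι → κ → ℝ) i j => (x i j : UnitAddCircle)) ⁻¹' T := by
    ext x
    simp [UnitAddTorus.sumZSMulHom_coe]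
  have hR : {u : κ → ℝ | (∀ j, u j ∈ Ico 0 1) ∧ u ∈ (fun u j => (u j : UnitAddCircle)) ⁻¹' T} =
      (univ.pi fun _ => Ico (0 : ℝ) 1) ∩ (fun (u : κ → ℝ) j => (u j : UnitAddCircle)) ⁻¹' T := by
    ext u
    simp
  rw [hL, hR,
    ((measurePreserving_sumZSMulHom hk).comp hcoe.pi_restrict_univ_pi).measure_inter_preimage
      (.univ_pi fun _ => .univ_pi fun _ => measurableSet_Ico) hT.nullMeasurableSet,
    hcoe.measure_inter_preimage (.univ_pi fun _ => measurableSet_Ico) hT.nullMeasurableSet]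

/-- The paper's `Ã_{1,m}(d, δ)` is the part of this set lying in `[0,1)^m`. -/
def coprimeApproxSet {κ : Type*} [Fintype κ] (d : ℤ) (a : κ → ℤ) (b : ℤ) (y : κ → ℝ) (δ : ℝ) :
    Set (κ → ℝ) :=
  {u | ∃ p : κ → ℤ, (∀ j, |(d : ℝ) * u j - p j - y j| < δ) ∧
    GCDMonoid.gcd d (Finset.univ.gcd fun j => b * p j + a j) = 1}

section coprimeApproxSet

variable {κ : Type*} [Fintype κ] (d : ℤ) (a : κ → ℤ) (b : ℤ) (y : κ → ℝ) (δ : ℝ)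

theorem measurableSet_coprimeApproxSet : MeasurableSet (coprimeApproxSet d a b y δ) := by
  simp only [coprimeApproxSet, ofPred_exists, ofPred_and, ofPred_forall]
  exact .iUnion fun p => .inter (.iInter fun j => measurableSet_lt (by fun_prop) measurable_const)
    (.const _)

theorem add_intCast_mem_coprimeApproxSet {u : κ → ℝ} (hu : u ∈ coprimeApproxSet d a b y δ)
    (t : κ → ℤ) : (fun j => u j + t j) ∈ coprimeApproxSet d a b y δ := by
  obtain ⟨p, hclose, hcop⟩ := hu
  refine ⟨fun j => p j + d * t j, fun j => ?_, ?_⟩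
  · convert hclose j using 2
    push_cast
    ring
  · rw [Finset.gcd_eq_of_dvd_sub (g := fun j => b * p j + a j) fun j _ => ⟨b * t j, by ring⟩]
    exact hcop

end coprimeApproxSet

theorem stmt13_general (n m : ℕ)
    (y : Fin m → ℝ) (δ : ℝ)
    (a : ℤ → Fin m → ℤ) (b : ℤ → ℕ)
    (q : Fin n → ℤ) (hq : q ≠ 0) (d : ℤ) (hd : Finset.univ.gcd q = d) :
    volume {x : Fin n → Fin m → ℝ | (∀ i j, x i j ∈ Set.Ico (0:ℝ) 1) ∧
        ∃ p : Fin m → ℤ,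
          (∀ j, |(∑ i, (q i : ℝ) * x i j) - p j - y j| < δ) ∧
          GCDMonoid.gcd (Finset.univ.gcd q)
            (Finset.univ.gcd (fun j => (b d : ℤ) * p j + a d j)) = 1} =
    volume {x : Fin m → ℝ | (∀ j, x j ∈ Set.Ico (0:ℝ) 1) ∧
        ∃ p : Fin m → ℤ,
          (∀ j, |(d : ℝ) * x j - p j - y j| < δ) ∧
          GCDMonoid.gcd d
            (Finset.univ.gcd (fun j => (b d : ℤ) * p j + a d j)) = 1} := by
  obtain ⟨k, hqk⟩ : ∃ k : Fin n → ℤ, ∀ i, q i = d * k i :=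
    ⟨fun i => q i / d, fun i =>
      (Int.mul_ediv_cancel' (hd ▸ Finset.gcd_dvd (Finset.mem_univ i))).symm⟩
  have hk : k ≠ 0 := fun h => hq (funext fun i => by simp [hqk, h])
  refine Eq.trans (congrArg volume (Set.ext fun x => ?_)) (volume_cube_inter_preimage_sum_zsmul
    (measurableSet_coprimeApproxSet d (a d) (b d) y δ)
    (fun u hu => add_intCast_mem_coprimeApproxSet d (a d) (b d) y δ hu) hk)
  have hsum : ∀ j, ∑ i, (q i : ℝ) * x i j = d * ∑ i, (k i : ℝ) * x i j := fun j => by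
    simp only [hqk, Int.cast_mul, Finset.mul_sum, mul_assoc]
  simp only [mem_ofPred_eq, coprimeApproxSet, hsum, hd]

theorem stmt13 (n m : ℕ) (hn : 1 ≤ n) (hm : 1 ≤ m)
    (y : Fin m → ℝ) (δ : ℝ) (hδ0 : 0 ≤ δ) (hδ : δ < 1/2)
    (a : ℤ → Fin m → ℤ) (b : ℤ → ℕ)
    (hab : ∀ d : ℤ, d ≠ 0 →
      GCDMonoid.gcd (Finset.univ.gcd (a d)) ((b d : ℤ)) = 1)
    (q : Fin n → ℤ) (hq : q ≠ 0) (d : ℤ) (hd : Finset.univ.gcd q = d) :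
    volume {x : Fin n → Fin m → ℝ | (∀ i j, x i j ∈ Set.Ico (0:ℝ) 1) ∧
        ∃ p : Fin m → ℤ,
          (∀ j, |(∑ i, (q i : ℝ) * x i j) - p j - y j| < δ) ∧
          GCDMonoid.gcd (Finset.univ.gcd q)
            (Finset.univ.gcd (fun j => (b d : ℤ) * p j + a d j)) = 1} =
    volume {x : Fin m → ℝ | (∀ j, x j ∈ Set.Ico (0:ℝ) 1) ∧
        ∃ p : Fin m → ℤ,
          (∀ j, |(d : ℝ) * x j - p j - y j| < δ) ∧
          GCDMonoid.gcd d
            (Finset.univ.gcd (fun j => (b d : ℤ) * p j + a d j)) = 1} :=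
  stmt13_general n m y δ a b q hq d hd
end

section
/- Let n, m ≥ 1, y = a/b ∈ ℚ^m with gcd(a,b) = 1, l = b+1, and T_l : [0,1)^{nm} → [0,1)^{nm} given by x ↦ lx mod 1. For Ψ : ℤ^n\{0} → ℝ_{≥0}, let ℱ = ⋃_{k≥1} 𝒜(kΨ), where 𝒜(kΨ) is the set of x with |qx - p - y| < kΨ(q) for infinitely many (q,p). Then T_l(ℱ) ⊆ ℱ. -/
open Set

theorem stmt16 (n m : ℕ) (hn : 1 ≤ n) (hm : 1 ≤ m)
    (a : Fin m → ℤ) (b : ℕ) (hb : 1 ≤ b)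
    (hab : GCDMonoid.gcd (Finset.univ.gcd a) ((b : ℤ)) = 1)
    (Ψ : (Fin n → ℤ) → ℝ) (hΨ : ∀ q, 0 ≤ Ψ q)
    (F : Set (Fin n → Fin m → ℝ))
    (hF : F = {x : Fin n → Fin m → ℝ | (∀ i j, x i j ∈ Set.Ico (0:ℝ) 1) ∧
        ∃ k : ℕ, 1 ≤ k ∧
          {qp : (Fin n → ℤ) × (Fin m → ℤ) | qp.1 ≠ 0 ∧
            ∀ j, |(∑ i, (qp.1 i : ℝ) * x i j) - qp.2 j - (a j : ℝ) / b| <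
              (k : ℝ) * Ψ qp.1}.Infinite}) :
    (fun (x : Fin n → Fin m → ℝ) (i : Fin n) (j : Fin m) =>
        Int.fract (((b : ℝ) + 1) * x i j)) '' F ⊆ F := by
  rintro _ ⟨x, hx, rfl⟩
  rw [hF] at hx ⊢
  obtain ⟨hx1, k, hk, hinf⟩ := hx
  have hb0 : (b : ℝ) ≠ 0 := by positivity
  refine ⟨fun i j => ⟨Int.fract_nonneg _, Int.fract_lt_one _⟩, k * (b + 1),
    hk.trans (Nat.le_mul_of_pos_right k (by omega)), ?_⟩
  set f : (Fin n → ℤ) × (Fin m → ℤ) → (Fin n → ℤ) × (Fin m → ℤ) :=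
    fun qp => (qp.1, fun j => (b + 1) * qp.2 j + a j
      - ∑ i, qp.1 i * ⌊((b : ℝ) + 1) * x i j⌋) with hf
  have hinj : Set.InjOn f {qp : (Fin n → ℤ) × (Fin m → ℤ) | qp.1 ≠ 0 ∧
      ∀ j, |(∑ i, (qp.1 i : ℝ) * x i j) - qp.2 j - (a j : ℝ) / b| <
        (k : ℝ) * Ψ qp.1} := by
    rintro ⟨q, p⟩ _ ⟨q', p'⟩ _ h
    simp only [hf, Prod.mk.injEq] at h
    obtain ⟨rfl, h2⟩ := h
    have : p = p' := by
      funext j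
      have h3 : ((b : ℤ) + 1) * p j = ((b : ℤ) + 1) * p' j := by
        have := congrFun h2 j
        linarith
      exact mul_left_cancel₀ (by positivity) h3
    simp [this]
  refine Set.Infinite.mono ?_ (hinf.image hinj)
  rintro _ ⟨⟨q, p⟩, ⟨hq0, hqp⟩, rfl⟩
  refine ⟨hq0, fun j => ?_⟩
  have key : (∑ i, (q i : ℝ) * Int.fract (((b : ℝ) + 1) * x i j))
      - (((b + 1) * p j + a j - ∑ i, q i * ⌊((b : ℝ) + 1) * x i j⌋ : ℤ) : ℝ)
      - (a j : ℝ) / b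
      = ((b : ℝ) + 1) * ((∑ i, (q i : ℝ) * x i j) - p j - (a j : ℝ) / b) := by
    have h1 : ∑ i, (q i : ℝ) * Int.fract (((b : ℝ) + 1) * x i j)
        = ((b : ℝ) + 1) * (∑ i, (q i : ℝ) * x i j)
          - ∑ i, (q i : ℝ) * ⌊((b : ℝ) + 1) * x i j⌋ := by
      rw [Finset.mul_sum, ← Finset.sum_sub_distrib]
      refine Finset.sum_congr rfl fun i _ => ?_
      simp only [Int.fract]
      ring
    rw [h1]
    push_cast
    field_simp
    ring
  simp only [hf]
  rw [key, abs_mul, abs_of_nonneg (by positivity : (0:ℝ) ≤ (b:ℝ) + 1)]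
  have := hqp j
  push_cast
  nlinarith [hΨ q, abs_nonneg ((∑ i, (q i : ℝ) * x i j) - p j - (a j : ℝ) / b)]
end

section
/- Let d, e be nonzero integers and δ₁, δ₂ ∈ [0,1/2), and y₁, y₂ ∈ ℝ. Define A(d,δ₁) = {x ∈ [0,1) : ∃p ∈ ℤ, |dx - p - y₁| < δ₁} and A(e,δ₂) = {x ∈ [0,1) : ∃s ∈ ℤ, |ex - s - y₂| < δ₂}. Then |A(d,δ₁) ∩ A(e,δ₂)| ≤ C(δ₁δ₂ + δ₁·gcd(d,e)/|d|) for an absolute constant C. -/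
/-!
Write `d = a g`, `e = b g` with `a, b` coprime and `u a + v b = 1`. If `x ∈ [0,1)` lies in both
sets, with witnesses `p` and `s`, then `k = a s - b p` is within `|b| δ₁ + |a| δ₂` of
`b y₁ - a y₂`, and the solutions of `a s - b p = k` are `p = a t - k v`, `s = b t + k u`, where
`x ∈ [0,1)` confines `t` to an interval of length `2g`. So the intersection is covered by
`O((|b| δ₁ + |a| δ₂ + 1) g)` sets, each of measure at most `min (2δ₁/|d|) (2δ₂/|e|)`, and
multiplying out gives the bound.
-/

open MeasureTheory Set
open scoped ENNReal

noncomputable def intsNear (z r : ℝ) : Finset ℤ := Finset.Icc ⌈z - r⌉ ⌊z + r⌋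

theorem mem_intsNear {z r : ℝ} {n : ℤ} : n ∈ intsNear z r ↔ |(n : ℝ) - z| ≤ r := by
  rw [intsNear, Finset.mem_Icc, Int.ceil_le, Int.le_floor, abs_sub_le_iff]
  constructor <;> rintro ⟨h₁, h₂⟩ <;> constructor <;> linarith

theorem card_intsNear_le {z r : ℝ} (hr : 0 ≤ r) : ((intsNear z r).card : ℝ) ≤ 2 * r + 1 := by
  rw [intsNear, Int.card_Icc]
  rcases le_total (⌊z + r⌋ + 1 - ⌈z - r⌉) 0 with h | h
  · rw [Int.toNat_of_nonpos h]
    push_cast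
    linarith
  · rw [← Int.cast_natCast, Int.toNat_of_nonneg h]
    push_cast
    linarith [Int.floor_le (z + r), Int.le_ceil (z - r)]

def strip (c y δ : ℝ) (n : ℤ) : Set ℝ := {x | |c * x - n - y| < δ}

theorem volume_strip {c : ℝ} (hc : c ≠ 0) (y δ : ℝ) (n : ℤ) :
    volume (strip c y δ n) = ENNReal.ofReal (2 * δ / |c|) := by
  have : strip c y δ n = (c * ·) ⁻¹' Metric.ball (n + y) δ := by
    ext x
    simp [strip, Real.dist_eq, sub_sub]
  rw [this, Real.volume_preimage_mul_left hc, Real.volume_ball,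
    ← ENNReal.ofReal_mul (abs_nonneg _), abs_inv, inv_mul_eq_div]

theorem volume_strip_inter_strip_le {c c' : ℝ} (hc : c ≠ 0) (hc' : c' ≠ 0) (y y' δ δ' : ℝ)
    (n n' : ℤ) :
    volume (strip c y δ n ∩ strip c' y' δ' n') ≤
      ENNReal.ofReal (min (2 * δ / |c|) (2 * δ' / |c'|)) := by
  rw [ENNReal.ofReal_min, ← volume_strip hc y δ n, ← volume_strip hc' y' δ' n']
  exact le_min (measure_mono inter_subset_left) (measure_mono inter_subset_right)

theorem measure_biUnion_finset_le_of_card_le {α ι : Type*} [MeasurableSpace α] {μ : Measure α}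
    {s : Finset ι} {f : ι → Set α} {N C : ℝ} (hN : (s.card : ℝ) ≤ N) (hC : 0 ≤ C)
    (h : ∀ i ∈ s, μ (f i) ≤ ENNReal.ofReal C) :
    μ (⋃ i ∈ s, f i) ≤ ENNReal.ofReal (N * C) :=
  calc μ (⋃ i ∈ s, f i) ≤ ∑ i ∈ s, μ (f i) := measure_biUnion_finset_le s f
    _ ≤ s.card • ENNReal.ofReal C := Finset.sum_le_card_nsmul s _ _ h
    _ = ENNReal.ofReal (s.card * C) := by
      rw [nsmul_eq_mul, ENNReal.ofReal_mul (Nat.cast_nonneg _), ENNReal.ofReal_natCast]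
    _ ≤ ENNReal.ofReal (N * C) := ENNReal.ofReal_le_ofReal (mul_le_mul_of_nonneg_right hN hC)

theorem Int.exists_eq_of_mul_sub_mul_eq {a b u v k p s : ℤ} (hab : u * a + v * b = 1)
    (ha : a ≠ 0) (h : a * s - b * p = k) : ∃ t, p = a * t - k * v ∧ s = b * t + k * u := by
  have hkey : b * (p + k * v) = a * (s - k * u) := by linear_combination k * hab - h
  obtain ⟨t, ht⟩ : a ∣ p + k * v :=
    IsCoprime.dvd_of_dvd_mul_left ⟨u, v, hab⟩ ⟨s - k * u, hkey⟩
  refine ⟨t, by linarith, ?_⟩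
  have : a * (s - k * u) = a * (b * t) := by rw [← hkey, ht]; ring
  linarith [mul_left_cancel₀ ha this]

theorem abs_mul_sub_mul_sub_le (a b g x p s y₁ y₂ : ℝ) :
    |a * s - b * p - (b * y₁ - a * y₂)| ≤
      |b| * |a * g * x - p - y₁| + |a| * |b * g * x - s - y₂| :=
  calc |a * s - b * p - (b * y₁ - a * y₂)|
      = |b * (a * g * x - p - y₁) - a * (b * g * x - s - y₂)| := by ring_nf
    _ ≤ |b * (a * g * x - p - y₁)| + |a * (b * g * x - s - y₂)| := abs_sub _ _
    _ = |b| * |a * g * x - p - y₁| + |a| * |b * g * x - s - y₂| := by rw [abs_mul, abs_mul]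

theorem abs_add_sub_half_le {a x p y : ℝ} (hx : x ∈ Ico 0 1) (h : |a * x - p - y| < 1 / 2) :
    |p + y - a / 2| ≤ (|a| + 1) / 2 := by
  have hx' : |x - 1 / 2| ≤ 1 / 2 := abs_sub_le_iff.mpr ⟨by linarith [hx.2], by linarith [hx.1]⟩
  calc |p + y - a / 2| = |a * (x - 1 / 2) - (a * x - p - y)| := by ring_nf
    _ ≤ |a| * |x - 1 / 2| + |a * x - p - y| := by rw [← abs_mul]; exact abs_sub _ _
    _ ≤ |a| * (1 / 2) + 1 / 2 := by gcongr
    _ = (|a| + 1) / 2 := by ring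

theorem inter_subset_biUnion_strip_inter {a b u v : ℤ} (hab : u * a + v * b = 1) (ha : a ≠ 0)
    {g : ℕ} (hg : 0 < g) {y₁ y₂ δ₁ δ₂ : ℝ} (hδ₁ : δ₁ < 1 / 2) :
    {x : ℝ | x ∈ Ico 0 1 ∧ ∃ p : ℤ, |((a * g : ℤ) : ℝ) * x - p - y₁| < δ₁} ∩
        {x : ℝ | x ∈ Ico 0 1 ∧ ∃ s : ℤ, |((b * g : ℤ) : ℝ) * x - s - y₂| < δ₂} ⊆
      ⋃ k ∈ intsNear (b * y₁ - a * y₂) (|(b : ℝ)| * δ₁ + |(a : ℝ)| * δ₂),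
        ⋃ t ∈ intsNear ((k * v - y₁) / a + g / 2) g,
          strip ((a * g : ℤ) : ℝ) y₁ δ₁ (a * t - k * v) ∩
            strip ((b * g : ℤ) : ℝ) y₂ δ₂ (b * t + k * u) := by
  rintro x ⟨⟨hx, p, hp⟩, -, s, hs⟩
  generalize hk : a * s - b * p = k
  have hk_near : |(k : ℝ) - (b * y₁ - a * y₂)| ≤ |(b : ℝ)| * δ₁ + |(a : ℝ)| * δ₂ := by
    rw [← hk]
    push_cast at hp hs ⊢
    exact (abs_mul_sub_mul_sub_le _ _ _ x _ _ _ _).trans (by gcongr)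
  have hp_near := abs_add_sub_half_le hx (hp.trans hδ₁)
  obtain ⟨t, rfl, rfl⟩ := Int.exists_eq_of_mul_sub_mul_eq hab ha hk
  have hg1 : (1 : ℝ) ≤ |(a : ℝ)| * g := one_le_mul_of_one_le_of_one_le
    (by exact_mod_cast Int.one_le_abs ha) (by exact_mod_cast hg)
  have ht_near : |(t : ℝ) - ((k * v - y₁) / a + g / 2)| ≤ g := by
    have haR : (a : ℝ) ≠ 0 := by exact_mod_cast ha
    rw [show (t : ℝ) - ((k * v - y₁) / a + g / 2) =
        (((a * t - k * v : ℤ) : ℝ) + y₁ - ((a * g : ℤ) : ℝ) / 2) / a by push_cast; field_simp; ring,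
      abs_div, div_le_iff₀ (abs_pos.mpr haR)]
    push_cast at hp_near ⊢
    rw [abs_mul, Nat.abs_cast] at hp_near
    linarith
  simp only [mem_iUnion, mem_intsNear, exists_prop]
  exact ⟨k, hk_near, t, ht_near, hp, hs⟩

theorem overlap_bound_arith {a b g δ₁ δ₂ : ℝ} (ha : 0 < a) (hb : 0 < b) (hg : 1 ≤ g)
    (hδ₁ : 0 ≤ δ₁) (hδ₂ : 0 ≤ δ₂) :
    (2 * (b * δ₁ + a * δ₂) + 1) * ((2 * g + 1) * min (2 * δ₁ / (a * g)) (2 * δ₂ / (b * g))) ≤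
      24 * (δ₁ * δ₂ + δ₁ * g / (a * g)) := by
  set M := min (2 * δ₁ / (a * g)) (2 * δ₂ / (b * g))
  have hM : 0 ≤ M := le_min (by positivity) (by positivity)
  have hM₁ : a * g * M ≤ 2 * δ₁ := (le_div_iff₀' (by positivity)).mp (min_le_left _ _)
  have hM₂ : b * g * M ≤ 2 * δ₂ := (le_div_iff₀' (by positivity)).mp (min_le_right _ _)
  have hgM : g * M ≤ 2 * (δ₁ * g / (a * g)) := by
    rw [mul_div_mul_right _ _ (by positivity : g ≠ 0), mul_div_assoc', le_div_iff₀' ha]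
    linarith
  calc (2 * (b * δ₁ + a * δ₂) + 1) * ((2 * g + 1) * M)
      ≤ (2 * (b * δ₁ + a * δ₂) + 1) * (3 * g * M) := by gcongr; linarith
    _ = 6 * δ₁ * (b * g * M) + 6 * δ₂ * (a * g * M) + 3 * (g * M) := by ring
    _ ≤ 6 * δ₁ * (2 * δ₂) + 6 * δ₂ * (2 * δ₁) + 3 * (2 * (δ₁ * g / (a * g))) := by gcongr
    _ ≤ 24 * (δ₁ * δ₂ + δ₁ * g / (a * g)) := by
      have : 0 ≤ δ₁ * g / (a * g) := by positivity
      linarith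

theorem stmt18 :
    ∃ C : ℝ, 0 < C ∧
      ∀ (d e : ℤ), d ≠ 0 → e ≠ 0 →
      ∀ (δ₁ δ₂ : ℝ), 0 ≤ δ₁ → δ₁ < 1/2 → 0 ≤ δ₂ → δ₂ < 1/2 →
      ∀ (y₁ y₂ : ℝ),
        volume ({x : ℝ | x ∈ Set.Ico (0:ℝ) 1 ∧ ∃ p : ℤ, |(d : ℝ) * x - p - y₁| < δ₁} ∩
            {x : ℝ | x ∈ Set.Ico (0:ℝ) 1 ∧ ∃ s : ℤ, |(e : ℝ) * x - s - y₂| < δ₂}) ≤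
          ENNReal.ofReal (C * (δ₁ * δ₂ + δ₁ * (Int.gcd d e : ℝ) / |(d : ℝ)|)) := by
  refine ⟨24, by norm_num, fun d e hd he δ₁ δ₂ hδ₁ hδ₁' hδ₂ _ y₁ y₂ => ?_⟩
  obtain ⟨g, a, b, hg, hab, rfl, rfl⟩ := Int.exists_gcd_one' (Int.gcd_pos_of_ne_zero_left e hd)
  obtain ⟨u, v, huv⟩ := Int.isCoprime_iff_gcd_eq_one.mpr hab
  have ha : a ≠ 0 := left_ne_zero_of_mul hd
  have hb : b ≠ 0 := left_ne_zero_of_mul he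
  have hgcd : Int.gcd (a * g) (b * g) = g := by
    rw [Int.gcd_mul_right, hab, one_mul, Int.natAbs_natCast]
  have habs : ∀ c : ℤ, |((c * g : ℤ) : ℝ)| = |(c : ℝ)| * g := fun c => by
    push_cast; rw [abs_mul, Nat.abs_cast]
  calc _ ≤ _ := measure_mono (inter_subset_biUnion_strip_inter huv ha hg hδ₁')
    _ ≤ _ := measure_biUnion_finset_le_of_card_le (card_intsNear_le (by positivity)) (by positivity)
        fun k _ => measure_biUnion_finset_le_of_card_le (card_intsNear_le g.cast_nonneg)
          (le_min (by positivity) (by positivity))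
          fun t _ => volume_strip_inter_strip_le (by exact_mod_cast hd) (by exact_mod_cast he) ..
    _ ≤ _ := by
      rw [hgcd, habs, habs]
      exact ENNReal.ofReal_le_ofReal (overlap_bound_arith (abs_pos.mpr (by exact_mod_cast ha))
        (abs_pos.mpr (by exact_mod_cast hb)) (by exact_mod_cast hg) hδ₁ hδ₂)
end
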